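/- arXiv:math/9712212 — 10 statements merged into one kernel-verified Lean document; each statement's English description precedes it below -/
import Mathlib

section
/- Let G be a finitely generated group with subgroups Λ and Σ. If X is a non-trivial Λ-almost invariant subset of G and Y is a non-trivial Σ-almost invariant subset of G, then X crosses Y if and only if Y crosses X. -/
/-!
Statement 0 (Lemma: crossing is symmetric).
`G` a finitely generated group, `Λ`, `Σ` subgroups; `X` a non-trivial `Λ`-almost invariant
subset of `G`, `Y` a non-trivial `Σ`-almost invariant subset of `G`.
Then `X` crosses `Y` iff `Y` crosses `X`.
-/

open scoped Pointwise symmDiff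

/-- The image of a subset `X ⊆ G` in the set `H\G` of right cosets `Hg`
(the quotient of `G` by the left multiplication action of `H`). -/
def rproj {G : Type*} [Group G] (H : Subgroup G) (X : Set G) :
    Set (Quotient (QuotientGroup.rightRel H)) :=
  Quotient.mk (QuotientGroup.rightRel H) '' X

/-- Two sets are almost equal if their symmetric difference is finite. -/
def AlmostEqSets {α : Type*} (A B : Set α) : Prop :=
  (A ∆ B).Finite

/-- `X ⊆ G` is `H`-almost invariant: `hX = X` for all `h ∈ H`, and for every `g ∈ G`
the sets `(H\X)g` and `H\X` are almost equal. -/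
def IsAlmostInvariant {G : Type*} [Group G] (H : Subgroup G) (X : Set G) : Prop :=
  (∀ h ∈ H, h • X = X) ∧
    ∀ g : G, AlmostEqSets (rproj H ((fun x => x * g) '' X)) (rproj H X)

/-- `X` is a non-trivial `H`-almost invariant subset of `G`:
in addition `H\X` and `H\Xᶜ` are both infinite. -/
def IsNontrivialAlmostInvariant {G : Type*} [Group G] (H : Subgroup G) (X : Set G) : Prop :=
  IsAlmostInvariant H X ∧ (rproj H X).Infinite ∧ (rproj H Xᶜ).Infinite

/-- `X` crosses `Y`, where `Y` is `K`-almost invariant: each of the four sets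
`X ∩ Y`, `Xᶜ ∩ Y`, `X ∩ Yᶜ`, `Xᶜ ∩ Yᶜ` projects to an infinite subset of `K\G`. -/
def Crosses {G : Type*} [Group G] (K : Subgroup G) (X Y : Set G) : Prop :=
  (rproj K (X ∩ Y)).Infinite ∧ (rproj K (Xᶜ ∩ Y)).Infinite ∧
    (rproj K (X ∩ Yᶜ)).Infinite ∧ (rproj K (Xᶜ ∩ Yᶜ)).Infinite

/-!
If `L\(X ∩ Y)` is finite but `K\(X ∩ Y)` is infinite, then by pigeonhole a single coset `La`
meets `Y` in infinitely many `K`-cosets. For any `g`, almost invariance of `Y` under right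
multiplication by `a⁻¹g` moves only finitely many `K`-cosets of `Y` out of `Y`, so some
`ℓa ∈ Y` with `ℓ ∈ L` has `ℓg ∈ Y`. For `g ∈ X` this puts `Lg = L(ℓg)` in `L\(X ∩ Y)`, so
`L\X` is finite. Apply this to the four corners; complements are again almost invariant.
-/

section CrossingSymmetry

variable {G : Type*} [Group G]

lemma mem_of_mk_mem_rproj {H : Subgroup G} {A : Set G} (hA : ∀ h ∈ H, h • A = A) {x : G}
    (hx : Quotient.mk (QuotientGroup.rightRel H) x ∈ rproj H A) : x ∈ A := by
  obtain ⟨a, ha, hax⟩ := hx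
  have hxa : x * a⁻¹ ∈ H := QuotientGroup.rightRel_apply.mp (Quotient.exact hax)
  rw [← hA _ hxa]
  exact ⟨a, ha, inv_mul_cancel_right x a⟩

lemma rproj_symmDiff_subset {H : Subgroup G} {A B : Set G} (hA : ∀ h ∈ H, h • A = A)
    (hB : ∀ h ∈ H, h • B = B) : rproj H (A ∆ B) ⊆ rproj H A ∆ rproj H B := by
  rintro _ ⟨x, hx | hx, rfl⟩
  · exact Or.inl ⟨⟨x, hx.1, rfl⟩, fun h => hx.2 (mem_of_mk_mem_rproj hB h)⟩
  · exact Or.inr ⟨⟨x, hx.1, rfl⟩, fun h => hx.2 (mem_of_mk_mem_rproj hA h)⟩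

lemma smul_image_mul_right {H : Subgroup G} {A : Set G} (hA : ∀ h ∈ H, h • A = A) (g : G) :
    ∀ h ∈ H, h • ((fun x => x * g) '' A) = (fun x => x * g) '' A := by
  intro h hh
  calc h • ((fun x => x * g) '' A) = (fun x => x * g) '' (h • A) := by
        simp only [← Set.image_smul, Set.image_image, smul_eq_mul, mul_assoc]
    _ = (fun x => x * g) '' A := by rw [hA h hh]

lemma IsAlmostInvariant.finite_rproj_symmDiff {K : Subgroup G} {Y : Set G}
    (hY : IsAlmostInvariant K Y) (g : G) :
    (rproj K (((fun x => x * g) '' Y) ∆ Y)).Finite :=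
  (hY.2 g).subset (rproj_symmDiff_subset (smul_image_mul_right hY.1 g) hY.1)

lemma image_mul_right_compl_symmDiff (Y : Set G) (g : G) :
    ((fun x => x * g) '' Yᶜ) ∆ Yᶜ = ((fun x => x * g) '' Y) ∆ Y := by
  rw [Set.image_compl_eq (Group.mulRight_bijective g), compl_symmDiff_compl]

lemma finite_rproj_setOf_mul_notMem {K : Subgroup G} {Y : Set G}
    (hY : ∀ g, (rproj K (((fun x => x * g) '' Y) ∆ Y)).Finite) (c : G) :
    (rproj K {y ∈ Y | y * c ∉ Y}).Finite := by
  refine (hY c⁻¹).subset (Set.image_mono fun y ⟨hy, hyc⟩ => Or.inr ⟨hy, ?_⟩)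
  simpa only [Set.image_mul_right, inv_inv, Set.mem_preimage] using hyc

lemma exists_mem_mul_mem_of_infinite {L K : Subgroup G} {Y : Set G}
    (hY : ∀ g, (rproj K (((fun x => x * g) '' Y) ∆ Y)).Finite) {a : G}
    (ha : (rproj K {y ∈ Y | y * a⁻¹ ∈ L}).Infinite) (g : G) : ∃ ℓ ∈ L, ℓ * g ∈ Y := by
  have hnsub : ¬{y ∈ Y | y * a⁻¹ ∈ L} ⊆ {y ∈ Y | y * (a⁻¹ * g) ∉ Y} := fun hsub =>
    ha ((finite_rproj_setOf_mul_notMem hY _).subset (Set.image_mono hsub))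
  obtain ⟨y, ⟨hyY, hyL⟩, hyg⟩ := Set.not_subset.mp hnsub
  exact ⟨y * a⁻¹, hyL, by simpa [mul_assoc, hyY] using hyg⟩

lemma exists_infinite_rproj_inter_coset {L K : Subgroup G} {B : Set G}
    (hL : (rproj L B).Finite) (hK : (rproj K B).Infinite) :
    ∃ a : G, (rproj K {x ∈ B | x * a⁻¹ ∈ L}).Infinite := by
  by_contra! hfin
  have hcover : rproj K B ⊆ ⋃ q ∈ rproj L B, rproj K {x ∈ B | x * q.out⁻¹ ∈ L} := by
    rintro _ ⟨x, hx, rfl⟩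
    refine Set.mem_biUnion ⟨x, hx, rfl⟩ ⟨x, ⟨hx, ?_⟩, rfl⟩
    exact QuotientGroup.rightRel_apply.mp (Quotient.mk_out x)
  exact hK ((hL.biUnion fun q _ => hfin q.out).subset hcover)

lemma infinite_rproj_inter {L K : Subgroup G} {X Y : Set G} (hX : ∀ h ∈ L, h • X = X)
    (hY : ∀ g, (rproj K (((fun x => x * g) '' Y) ∆ Y)).Finite) (hXinf : (rproj L X).Infinite)
    (hXY : (rproj K (X ∩ Y)).Infinite) : (rproj L (X ∩ Y)).Infinite := by
  intro hfin
  obtain ⟨a, ha⟩ := exists_infinite_rproj_inter_coset hfin hXY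
  have hYa : (rproj K {y ∈ Y | y * a⁻¹ ∈ L}).Infinite :=
    ha.mono (Set.image_mono fun x hx => ⟨hx.1.2, hx.2⟩)
  refine hXinf (hfin.subset ?_)
  rintro _ ⟨g, hg, rfl⟩
  obtain ⟨ℓ, hℓ, hℓg⟩ := exists_mem_mul_mem_of_infinite hY hYa g
  have hℓgX : ℓ * g ∈ X := hX ℓ hℓ ▸ Set.smul_mem_smul_set hg
  refine ⟨ℓ * g, ⟨hℓgX, hℓg⟩, Quotient.sound (QuotientGroup.rightRel_apply.mpr ?_)⟩
  simpa using L.inv_mem hℓ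

lemma Crosses.symm {L K : Subgroup G} {X Y : Set G} (hX : IsNontrivialAlmostInvariant L X)
    (hY : IsAlmostInvariant K Y) (h : Crosses K X Y) : Crosses L Y X := by
  obtain ⟨⟨hXinv, -⟩, hXinf, hXcinf⟩ := hX
  have hXcinv : ∀ h ∈ L, h • Xᶜ = Xᶜ := fun h hh => by rw [Set.smul_set_compl, hXinv h hh]
  have hYc : ∀ g, (rproj K (((fun x => x * g) '' Yᶜ) ∆ Yᶜ)).Finite := fun g => by
    rw [image_mul_right_compl_symmDiff]
    exact hY.finite_rproj_symmDiff g
  obtain ⟨h₁, h₂, h₃, h₄⟩ := h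
  simp only [Crosses, Set.inter_comm Y, Set.inter_comm Yᶜ]
  exact ⟨infinite_rproj_inter hXinv hY.finite_rproj_symmDiff hXinf h₁,
    infinite_rproj_inter hXinv hYc hXinf h₃,
    infinite_rproj_inter hXcinv hY.finite_rproj_symmDiff hXcinf h₂,
    infinite_rproj_inter hXcinv hYc hXcinf h₄⟩

end CrossingSymmetry

theorem crossing_is_symmetric_general {G : Type*} [Group G]
    (L K : Subgroup G) (X Y : Set G)
    (hX : IsNontrivialAlmostInvariant L X) (hY : IsNontrivialAlmostInvariant K Y) :
    Crosses K X Y ↔ Crosses L Y X :=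
  ⟨Crosses.symm hX hY.1, Crosses.symm hY hX.1⟩

theorem crossing_is_symmetric {G : Type*} [Group G] [Group.FG G]
    (L K : Subgroup G) (X Y : Set G)
    (hX : IsNontrivialAlmostInvariant L X) (hY : IsNontrivialAlmostInvariant K Y) :
    Crosses K X Y ↔ Crosses L Y X :=
  crossing_is_symmetric_general L K X Y hX hY
end

section
/- Let G = ℤ × ℤ, let Λ be the subgroup generated by (1,0) and let Σ be the subgroup generated by (0,1). Set X = {(m,n) ∈ G : n > 0} and Y = {(m,n) ∈ G : m = 0}. Then: (i) X is a non-trivial Λ-almost invariant subset of G; (ii) Y is a Σ-almost invariant subset of G which is trivial (Σ\Y is finite); (iii) Y crosses X; and (iv) X does not cross Y. -/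
/-!
Statement 1: `G = ℤ × ℤ`, `Λ = ⟨(1,0)⟩`, `Σ = ⟨(0,1)⟩`, `X = {(m,n) : n > 0}`,
`Y = {(m,n) : m = 0}`.  Then `X` is a non-trivial `Λ`-almost invariant subset of `G`,
`Y` is a trivial `Σ`-almost invariant subset of `G`, `Y` crosses `X`, but `X` does not
cross `Y`.
-/

open scoped symmDiff

/-- The image of a subset `X ⊆ G` in the set `H\G` of right cosets `H + g`
(the quotient of `G` by the left translation action of `H`). -/
def rprojAdd {G : Type*} [AddGroup G] (H : AddSubgroup G) (X : Set G) :
    Set (Quotient (QuotientAddGroup.rightRel H)) :=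
  Quotient.mk (QuotientAddGroup.rightRel H) '' X

/-- `X ⊆ G` is `H`-almost invariant: `h + X = X` for all `h ∈ H`, and for every `g ∈ G`
the sets `(H\X) + g` and `H\X` are almost equal. -/
def IsAddAlmostInvariant {G : Type*} [AddGroup G] (H : AddSubgroup G) (X : Set G) : Prop :=
  (∀ h ∈ H, (fun x => h + x) '' X = X) ∧
    ∀ g : G, AlmostEqSets (rprojAdd H ((fun x => x + g) '' X)) (rprojAdd H X)

/-- `X` is a non-trivial `H`-almost invariant subset of `G`:
in addition `H\X` and `H\Xᶜ` are both infinite. -/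
def IsNontrivialAddAlmostInvariant {G : Type*} [AddGroup G] (H : AddSubgroup G)
    (X : Set G) : Prop :=
  IsAddAlmostInvariant H X ∧ (rprojAdd H X).Infinite ∧ (rprojAdd H Xᶜ).Infinite

/-- `X` crosses `Y`, where `Y` is `K`-almost invariant: each of the four sets
`X ∩ Y`, `Xᶜ ∩ Y`, `X ∩ Yᶜ`, `Xᶜ ∩ Yᶜ` projects to an infinite subset of `K\G`. -/
def CrossesAdd {G : Type*} [AddGroup G] (K : AddSubgroup G) (X Y : Set G) : Prop :=
  (rprojAdd K (X ∩ Y)).Infinite ∧ (rprojAdd K (Xᶜ ∩ Y)).Infinite ∧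
    (rprojAdd K (X ∩ Yᶜ)).Infinite ∧ (rprojAdd K (Xᶜ ∩ Yᶜ)).Infinite

section Helpers

variable {H : AddSubgroup (ℤ × ℤ)} (φ : ℤ × ℤ → ℤ)
/-- Lift of a coordinate map to the right-coset space. -/
def liftφ (hφ : ∀ a b : ℤ × ℤ, b + -a ∈ H ↔ φ a = φ b) : Quotient (QuotientAddGroup.rightRel H) → ℤ :=
  Quotient.lift φ fun a b h => (hφ a b).1 (QuotientAddGroup.rightRel_apply.mp h)

lemma liftφ_inj (hφ : ∀ a b : ℤ × ℤ, b + -a ∈ H ↔ φ a = φ b) : Function.Injective (liftφ φ hφ) := by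
  intro q1 q2
  induction q1 using Quotient.inductionOn with
  | h a =>
  induction q2 using Quotient.inductionOn with
  | h b =>
  intro h
  exact Quotient.sound (QuotientAddGroup.rightRel_apply.mpr ((hφ a b).2 h))

lemma liftφ_image (hφ : ∀ a b : ℤ × ℤ, b + -a ∈ H ↔ φ a = φ b) (S : Set (ℤ × ℤ)) : liftφ φ hφ '' rprojAdd H S = φ '' S := by
  rw [rprojAdd, ← Set.image_comp]
  rfl

lemma inf_of (hφ : ∀ a b : ℤ × ℤ, b + -a ∈ H ↔ φ a = φ b) (S : Set (ℤ × ℤ)) (h : (φ '' S).Infinite) : (rprojAdd H S).Infinite :=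
  fun hfin => h (liftφ_image φ hφ S ▸ hfin.image _)

lemma fin_of (hφ : ∀ a b : ℤ × ℤ, b + -a ∈ H ↔ φ a = φ b) (S : Set (ℤ × ℤ)) (h : (φ '' S).Finite) : (rprojAdd H S).Finite :=
  Set.Finite.of_finite_image (liftφ_image φ hφ S ▸ h) (liftφ_inj φ hφ).injOn

lemma aeq_of (hφ : ∀ a b : ℤ × ℤ, b + -a ∈ H ↔ φ a = φ b) (S T : Set (ℤ × ℤ)) (h : ((φ '' S) ∆ (φ '' T)).Finite) :
    AlmostEqSets (rprojAdd H S) (rprojAdd H T) := by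
  have him : liftφ φ hφ '' (rprojAdd H S ∆ rprojAdd H T) = (φ '' S) ∆ (φ '' T) := by
    rw [Set.image_symmDiff (liftφ_inj φ hφ), liftφ_image, liftφ_image]
  exact Set.Finite.of_finite_image (him ▸ h) (liftφ_inj φ hφ).injOn

end Helpers

lemma mem_closure_basis (p : ℤ × ℤ) :
    (p ∈ AddSubgroup.closure {((1 : ℤ), (0 : ℤ))} ↔ p.2 = 0) ∧
    (p ∈ AddSubgroup.closure {((0 : ℤ), (1 : ℤ))} ↔ p.1 = 0) := by
  constructor
  · rw [← AddSubgroup.zmultiples_eq_closure, AddSubgroup.mem_zmultiples_iff]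
    constructor
    · rintro ⟨k, rfl⟩; simp
    · intro hp; exact ⟨p.1, by ext <;> simp [hp]⟩
  · rw [← AddSubgroup.zmultiples_eq_closure, AddSubgroup.mem_zmultiples_iff]
    constructor
    · rintro ⟨k, rfl⟩; simp
    · intro hp; exact ⟨p.2, by ext <;> simp [hp]⟩

lemma Ioi_symmDiff_finite (a : ℤ) : ((Set.Ioi a) ∆ (Set.Ioi (0 : ℤ))).Finite := by
  apply Set.Finite.subset (Set.finite_Icc (min a 0) (max a 0))
  intro n hn
  rcases Set.mem_symmDiff.1 hn with ⟨h1, h2⟩ | ⟨h1, h2⟩ <;>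
    simp only [Set.mem_Ioi, not_lt, Set.mem_Icc] at * <;> omega

theorem trivial_side_crossing_example
    (L K : AddSubgroup (ℤ × ℤ))
    (hL : L = AddSubgroup.closure {((1 : ℤ), (0 : ℤ))})
    (hK : K = AddSubgroup.closure {((0 : ℤ), (1 : ℤ))})
    (X Y : Set (ℤ × ℤ))
    (hX : X = {p : ℤ × ℤ | 0 < p.2})
    (hY : Y = {p : ℤ × ℤ | p.1 = 0}) :
    IsNontrivialAddAlmostInvariant L X ∧
    (IsAddAlmostInvariant K Y ∧ (rprojAdd K Y).Finite) ∧
    CrossesAdd L Y X ∧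
    ¬ CrossesAdd K X Y := by
  have memL : ∀ p : ℤ × ℤ, p ∈ L ↔ p.2 = 0 := fun p => hL ▸ (mem_closure_basis p).1
  have memK : ∀ p : ℤ × ℤ, p ∈ K ↔ p.1 = 0 := fun p => hK ▸ (mem_closure_basis p).2
  have hφL : ∀ a b : ℤ × ℤ, b + -a ∈ L ↔ Prod.snd a = Prod.snd b := by
    intro a b; rw [memL]; simp; omega
  have hφK : ∀ a b : ℤ × ℤ, b + -a ∈ K ↔ Prod.fst a = Prod.fst b := by
    intro a b; rw [memK]; simp; omega
  -- image computations
  have imgX : Prod.snd '' X = Set.Ioi (0 : ℤ) := by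
    ext n
    simp only [hX, Set.mem_image, Set.mem_setOf_eq, Set.mem_Ioi]
    exact ⟨fun ⟨p, hp, he⟩ => he ▸ hp, fun hn => ⟨(0, n), hn, rfl⟩⟩
  have imgXc : Prod.snd '' Xᶜ = Set.Iic (0 : ℤ) := by
    ext n
    simp only [hX, Set.mem_image, Set.mem_compl_iff, Set.mem_setOf_eq, not_lt, Set.mem_Iic]
    exact ⟨fun ⟨p, hp, he⟩ => he ▸ hp, fun hn => ⟨(0, n), hn, rfl⟩⟩
  have imgXg : ∀ g : ℤ × ℤ, Prod.snd '' ((fun x => x + g) '' X) = Set.Ioi g.2 := by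
    intro g
    ext n
    simp only [hX, Set.mem_image, Set.mem_setOf_eq, Set.mem_Ioi]
    constructor
    · rintro ⟨q, ⟨p, hp, rfl⟩, rfl⟩
      simp only [Prod.snd_add]; omega
    · intro hn
      exact ⟨(0, n - g.2) + g, ⟨(0, n - g.2), by simpa using hn, rfl⟩, by simp⟩
  refine ⟨⟨⟨?_, ?_⟩, ?_, ?_⟩, ⟨⟨?_, ?_⟩, ?_⟩, ⟨?_, ?_, ?_, ?_⟩, ?_⟩
  · -- h + X = X for h ∈ L
    intro h hh
    have h2 : h.2 = 0 := (memL h).1 hh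
    ext p
    simp only [hX, Set.mem_image, Set.mem_setOf_eq]
    constructor
    · rintro ⟨q, hq, rfl⟩; simp only [Prod.snd_add]; omega
    · intro hp
      refine ⟨p - h, by simp only [Prod.snd_sub]; omega, by abel⟩
  · -- almost invariance of X
    intro g
    apply aeq_of Prod.snd hφL
    rw [imgX, imgXg]
    exact Ioi_symmDiff_finite g.2
  · exact inf_of Prod.snd hφL X (imgX ▸ Set.Ioi_infinite 0)
  · exact inf_of Prod.snd hφL Xᶜ (imgXc ▸ Set.Iic_infinite 0)
  · -- h + Y = Y for h ∈ K
    intro h hh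
    have h1 : h.1 = 0 := (memK h).1 hh
    ext p
    simp only [hY, Set.mem_image, Set.mem_setOf_eq]
    constructor
    · rintro ⟨q, hq, rfl⟩; simp only [Prod.fst_add]; omega
    · intro hp
      refine ⟨p - h, by simp only [Prod.fst_sub]; omega, by abel⟩
  · -- almost invariance of Y
    intro g
    apply aeq_of Prod.fst hφK
    apply Set.Finite.subset (Set.finite_union.2 ⟨Set.finite_singleton g.1, Set.finite_singleton 0⟩)
    apply Set.symmDiff_subset_union.trans
    apply Set.union_subset_union <;> rintro n ⟨p, hp, rfl⟩
    · rcases hp with ⟨q, hq, rfl⟩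
      simp only [hY, Set.mem_setOf_eq] at hq
      simp [hq]
    · simp only [hY, Set.mem_setOf_eq] at hp
      simp [hp]
  · -- triviality of Y
    apply fin_of Prod.fst hφK
    apply Set.Finite.subset (Set.finite_singleton (0 : ℤ))
    rintro n ⟨p, hp, rfl⟩
    simp only [hY, Set.mem_setOf_eq] at hp
    simp [hp]
  · -- Y ∩ X
    apply inf_of Prod.snd hφL
    apply Set.infinite_of_injective_forall_mem (f := fun n : ℕ => (n : ℤ) + 1)
    case hi => intro a b h; simpa using h
    case hf =>
      intro n
      exact ⟨((0 : ℤ), (n : ℤ) + 1), ⟨by simp [hY], by simp [hX]⟩, rfl⟩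
  · -- Yᶜ ∩ X
    apply inf_of Prod.snd hφL
    apply Set.infinite_of_injective_forall_mem (f := fun n : ℕ => (n : ℤ) + 1)
    case hi => intro a b h; simpa using h
    case hf =>
      intro n
      exact ⟨((1 : ℤ), (n : ℤ) + 1), ⟨by simp [hY], by simp [hX]⟩, rfl⟩
  · -- Y ∩ Xᶜ
    apply inf_of Prod.snd hφL
    apply Set.infinite_of_injective_forall_mem (f := fun n : ℕ => -(n : ℤ))
    case hi => intro a b h; simpa using h
    case hf =>
      intro n
      exact ⟨((0 : ℤ), -(n : ℤ)), ⟨by simp [hY], by simp [hX]⟩, rfl⟩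
  · -- Yᶜ ∩ Xᶜ
    apply inf_of Prod.snd hφL
    apply Set.infinite_of_injective_forall_mem (f := fun n : ℕ => -(n : ℤ))
    case hi => intro a b h; simpa using h
    case hf =>
      intro n
      exact ⟨((1 : ℤ), -(n : ℤ)), ⟨by simp [hY], by simp [hX]⟩, rfl⟩
  · -- X does not cross Y
    rintro ⟨h1, -, -, -⟩
    apply h1
    apply fin_of Prod.fst hφK
    apply Set.Finite.subset (Set.finite_singleton (0 : ℤ))
    rintro n ⟨p, ⟨-, hp2⟩, rfl⟩
    simp only [hY, Set.mem_setOf_eq] at hp2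
    simp [hp2]
end

section
/- Let G be a finitely generated group and let Λ and Σ be finitely generated subgroups of G. Let X be a non-trivial Λ-almost invariant subset of G and Y a non-trivial Σ-almost invariant subset of G. Then the set of double cosets ΣgΛ (g ∈ G) such that gX crosses Y is finite. -/
/-!
Fix a finite monoid generating set `S` of `G` and view `G` as the Cayley graph with edges
`x — x * s`. Almost invariance of `X` means that its boundary `∂X` lies in finitely many
cosets `Λd`, and finite generation of `Λ` lets one enlarge these to a connected set `ΛD`
with `D` finite; likewise `∂Y ⊆ ΣB` with `ΣB` connected. If `g • ΛD` misses `ΣB`, then the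
connected set `g • ΛD ⊇ ∂(gX)` avoids `∂Y` and so lies on one side `U` of `Y`, and `ΣB ⊇ ∂Y`
lies on one side `V` of `gX`. Then no edge leaves `Uᶜ ∩ Vᶜ`, so this corner is empty or all
of `G`, and `gX` does not cross `Y`. Hence crossing forces `g ∈ ΣBD⁻¹Λ`, which meets only
finitely many double cosets.
-/

open scoped Pointwise symmDiff

section Cayley

variable {G : Type*} [Group G] {S : Set G}

def cayleyBoundary (S W : Set G) : Set G :=
  {x | ∃ s ∈ S, ¬(x * s ∈ W ↔ x ∈ W)}

def ReachWithin (S C : Set G) : G → G → Prop :=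
  Relation.ReflTransGen fun u v => u ∈ C ∧ v ∈ C ∧ u⁻¹ * v ∈ S

def IsCayleyConnected (S C : Set G) : Prop :=
  ∃ x₀ ∈ C, ∀ x ∈ C, ReachWithin S C x₀ x

@[simp]
lemma cayleyBoundary_compl (W : Set G) : cayleyBoundary S Wᶜ = cayleyBoundary S W := by
  simp only [cayleyBoundary, Set.mem_compl_iff, not_iff_not]

lemma cayleyBoundary_smul (g : G) (W : Set G) :
    cayleyBoundary S (g • W) = g • cayleyBoundary S W := by
  ext x
  simp only [cayleyBoundary, Set.mem_ofPred_eq, Set.mem_smul_set_iff_inv_smul_mem, smul_eq_mul,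
    mul_assoc]

lemma ReachWithin.smul {C : Set G} {a b : G} (g : G) (h : ReachWithin S C a b) :
    ReachWithin S (g • C) (g * a) (g * b) := by
  induction h with
  | refl => exact .refl
  | tail _ hstep ih =>
    obtain ⟨hu, hv, hs⟩ := hstep
    exact ih.tail ⟨Set.smul_mem_smul_set hu, Set.smul_mem_smul_set hv, by simpa [mul_assoc]⟩

lemma IsCayleyConnected.smul {C : Set G} (g : G) (hC : IsCayleyConnected S C) :
    IsCayleyConnected S (g • C) := by
  obtain ⟨x₀, hx₀, hreach⟩ := hC
  refine ⟨g * x₀, Set.smul_mem_smul_set hx₀, ?_⟩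
  rintro _ ⟨x, hx, rfl⟩
  exact (hreach x hx).smul g

lemma ReachWithin.mem_iff_mem {C W : Set G} (hW : Disjoint C (cayleyBoundary S W)) {a b : G}
    (h : ReachWithin S C a b) : a ∈ W ↔ b ∈ W := by
  induction h with
  | refl => rfl
  | @tail u v _ hstep ih =>
    obtain ⟨hu, -, hs⟩ := hstep
    have hu' : u ∉ cayleyBoundary S W := Set.disjoint_left.mp hW hu
    simp only [cayleyBoundary, Set.mem_ofPred_eq, not_exists, not_and, not_not] at hu'
    simpa using ih.trans (hu' _ hs).symm

lemma IsCayleyConnected.subset_or_subset_compl {C W : Set G} (hC : IsCayleyConnected S C)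
    (hW : Disjoint C (cayleyBoundary S W)) : C ⊆ W ∨ C ⊆ Wᶜ := by
  obtain ⟨x₀, -, hreach⟩ := hC
  by_cases hx₀ : x₀ ∈ W
  · exact .inl fun x hx => ((hreach x hx).mem_iff_mem hW).mp hx₀
  · exact .inr fun x hx hxW => hx₀ (((hreach x hx).mem_iff_mem hW).mpr hxW)

lemma reachWithin_mul_prod {C : Set G} {x : G} {l : List G} (hl : ∀ s ∈ l, s ∈ S)
    (hC : ∀ l', l' <+: l → x * l'.prod ∈ C) : ReachWithin S C x (x * l.prod) := by
  induction l using List.reverseRecOn with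
  | nil =>
    rw [List.prod_nil, mul_one]
    exact .refl
  | append_singleton l s ih =>
    have hprefix := List.prefix_append l [s]
    refine (ih (fun t ht => hl t (by simp [ht])) fun l' hl' => hC l' (hl'.trans hprefix)).tail
      ⟨hC l hprefix, hC _ List.prefix_rfl, ?_⟩
    simpa [mul_assoc] using hl s (by simp)

lemma eq_univ_of_mul_mem (hS : Submonoid.closure S = ⊤) {A : Set G}
    (hA : ∀ x ∈ A, ∀ s ∈ S, x * s ∈ A) (hne : A.Nonempty) : A = Set.univ := by
  obtain ⟨a, ha⟩ := hne
  refine Set.eq_univ_of_forall fun y => ?_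
  have key : ∀ z ∈ Submonoid.closure S, a * z ∈ A := by
    intro z hz
    induction hz using Submonoid.closure_induction_right with
    | one => simpa using ha
    | mul_right z _ s hs ih => simpa [mul_assoc] using hA _ ih s hs
  simpa using key (a⁻¹ * y) (hS ▸ Submonoid.mem_top _)

/-- No edge leaves the corner `Uᶜ ∩ Vᶜ`: an edge into `U` would put its start in `∂U ⊆ V`,
and similarly for `V`. -/
lemma compl_inter_compl_eq_empty (hS : Submonoid.closure S = ⊤) {U V : Set G}
    (hU : cayleyBoundary S U ⊆ V) (hV : cayleyBoundary S V ⊆ U) (hne : U.Nonempty) :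
    Uᶜ ∩ Vᶜ = ∅ := by
  by_contra hcorner
  have hclosed : ∀ x ∈ Uᶜ ∩ Vᶜ, ∀ s ∈ S, x * s ∈ Uᶜ ∩ Vᶜ := by
    rintro x ⟨hxU, hxV⟩ s hs
    exact ⟨fun hxsU => hxV (hU ⟨s, hs, by tauto⟩), fun hxsV => hxU (hV ⟨s, hs, by tauto⟩)⟩
  obtain ⟨u, hu⟩ := hne
  have huniv := eq_univ_of_mul_mem hS hclosed (Set.nonempty_iff_ne_empty.mpr hcorner)
  exact (huniv ▸ Set.mem_univ u : u ∈ Uᶜ ∩ Vᶜ).1 hu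

lemma inter_nonempty_of_corners_nonempty (hS : Submonoid.closure S = ⊤) {X Y P Q : Set G}
    (hP : IsCayleyConnected S P) (hQ : IsCayleyConnected S Q)
    (hXP : cayleyBoundary S X ⊆ P) (hYQ : cayleyBoundary S Y ⊆ Q)
    (h₁ : (X ∩ Y).Nonempty) (h₂ : (Xᶜ ∩ Y).Nonempty) (h₃ : (X ∩ Yᶜ).Nonempty)
    (h₄ : (Xᶜ ∩ Yᶜ).Nonempty) : (P ∩ Q).Nonempty := by
  by_contra hPQ
  rw [Set.not_nonempty_iff_eq_empty, ← Set.disjoint_iff_inter_eq_empty] at hPQ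
  rcases hP.subset_or_subset_compl (hPQ.mono_right hYQ) with hPY | hPY <;>
  rcases hQ.subset_or_subset_compl (hPQ.symm.mono_right hXP) with hQX | hQX
  · exact h₄.ne_empty <| compl_inter_compl_eq_empty hS (hXP.trans hPY) (hYQ.trans hQX)
      (h₁.mono Set.inter_subset_left)
  · refine h₃.ne_empty ?_
    simpa using compl_inter_compl_eq_empty (U := Xᶜ) hS (by simpa using hXP.trans hPY)
      (hYQ.trans hQX) (h₂.mono Set.inter_subset_left)
  · refine h₂.ne_empty ?_
    simpa using compl_inter_compl_eq_empty (V := Yᶜ) hS (hXP.trans hPY)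
      (by simpa using hYQ.trans hQX) (h₁.mono Set.inter_subset_left)
  · refine h₁.ne_empty ?_
    simpa using compl_inter_compl_eq_empty (U := Xᶜ) (V := Yᶜ) hS
      (by simpa using hXP.trans hPY) (by simpa using hYQ.trans hQX) (h₂.mono Set.inter_subset_left)

/-- Take `D` to consist of the prefix products of words in `S` for the elements of `F` and for
generators of `H`: a generator step `h ⟶ h * t` then runs inside `h * D`. -/
lemma exists_finite_superset_isCayleyConnected_mul (hS : Submonoid.closure S = ⊤)
    {H : Submonoid G} (hH : H.FG) {F : Set G} (hF : F.Finite) :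
    ∃ D : Set G, D.Finite ∧ F ⊆ D ∧ IsCayleyConnected S (H * D) := by
  obtain ⟨T, rfl, hT⟩ := (Submonoid.fg_iff H).mp hH
  choose word hwordS hword using fun g : G =>
    Submonoid.exists_list_of_mem_closure (hS ▸ Submonoid.mem_top g)
  set E : Set G := insert 1 (F ∪ T)
  set D : Set G := ⋃ e ∈ E, {p | p ∈ (word e).inits.map List.prod}
  have hprefix {e : G} (he : e ∈ E) {l : List G} (hl : l <+: word e) : l.prod ∈ D :=
    Set.mem_biUnion he (List.mem_map.mpr ⟨l, (List.mem_inits _ _).mpr hl, rfl⟩)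
  have hED : E ⊆ D := fun e he => hword e ▸ hprefix he List.prefix_rfl
  have hstep {h : G} (hh : h ∈ Submonoid.closure T) {e : G} (he : e ∈ E) {l : List G}
      (hl : l <+: word e) : ReachWithin S (Submonoid.closure T * D) h (h * l.prod) :=
    reachWithin_mul_prod (fun s hs => hwordS e s (hl.subset hs))
      fun l' hl' => Set.mul_mem_mul hh (hprefix he (hl'.trans hl))
  have hgen : ∀ h ∈ Submonoid.closure T, ReachWithin S (Submonoid.closure T * D) 1 h := by
    intro h hh
    induction hh using Submonoid.closure_induction_right with
    | one => exact .refl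
    | mul_right x hx t ht ih =>
      have hxt := ih.trans (hstep hx (.inr (.inr ht)) List.prefix_rfl)
      rwa [hword] at hxt
  refine ⟨D, (Set.finite_insert.mpr (hF.union hT)).biUnion fun e _ => List.finite_toSet _,
    fun x hx => hED (.inr (.inl hx)), 1, ⟨1, Submonoid.one_mem _, 1, hED (.inl rfl), one_mul 1⟩, ?_⟩
  rintro _ ⟨h, hh, d, hd, rfl⟩
  obtain ⟨e, he, hde⟩ := Set.mem_iUnion₂.mp hd
  obtain ⟨l, hl, rfl⟩ := List.mem_map.mp hde
  exact (hgen h hh).trans (hstep hh he ((List.mem_inits _ _).mp hl))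

end Cayley

section Cosets

variable {G : Type*} [Group G] {H : Subgroup G}

lemma mk_mem_rproj_iff {A : Set G} (hA : ∀ h ∈ H, ∀ x ∈ A, h * x ∈ A) (x : G) :
    Quotient.mk (QuotientGroup.rightRel H) x ∈ rproj H A ↔ x ∈ A := by
  refine ⟨fun ⟨a, ha, hax⟩ => ?_, fun hx => ⟨x, hx, rfl⟩⟩
  have hxa : x * a⁻¹ ∈ H := QuotientGroup.rightRel_apply.mp (Quotient.exact hax)
  simpa using hA _ hxa a ha

/-- A boundary point `x` of `A` with `x` and `x * s` on different sides projects into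
`(H\A)s⁻¹ ∆ H\A`, which is finite by almost invariance. -/
lemma rproj_cayleyBoundary_finite {S A : Set G} (hS : S.Finite) (hA : IsAlmostInvariant H A) :
    (rproj H (cayleyBoundary S A)).Finite := by
  have hinv : ∀ h ∈ H, ∀ x ∈ A, h * x ∈ A := fun h hh x hx =>
    hA.1 h hh ▸ Set.smul_mem_smul_set hx
  have hinv' (s : G) : ∀ h ∈ H, ∀ x ∈ (fun y => y * s⁻¹) '' A, h * x ∈ (fun y => y * s⁻¹) '' A := by
    simp only [Set.image_mul_right, inv_inv, Set.mem_preimage, mul_assoc]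
    exact fun h hh x hx => hinv h hh _ hx
  refine (hS.biUnion fun s _ => hA.2 s⁻¹).subset ?_
  rintro _ ⟨x, ⟨s, hs, hxs⟩, rfl⟩
  refine Set.mem_biUnion hs ?_
  rw [Set.mem_symmDiff, mk_mem_rproj_iff (hinv' s), mk_mem_rproj_iff hinv, Set.image_mul_right]
  simp only [Set.mem_preimage, inv_inv]
  tauto

lemma exists_finite_subset_mul_of_rproj_finite {A : Set G} (hA : (rproj H A).Finite) :
    ∃ D : Set G, D.Finite ∧ A ⊆ H * D := by
  refine ⟨Quotient.out '' rproj H A, hA.image _, fun x hx => ?_⟩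
  set q := Quotient.mk (QuotientGroup.rightRel H) x
  have hxq : x * q.out⁻¹ ∈ H :=
    QuotientGroup.rightRel_apply.mp (Quotient.exact (Quotient.out_eq q))
  exact ⟨x * q.out⁻¹, hxq, q.out, ⟨q, ⟨x, hx, rfl⟩, rfl⟩, by simp⟩

lemma doubleCoset_mk_mem_image_mul_inv {K L : Subgroup G} {B D : Set G} {g : G}
    (h : (g • ((L : Set G) * D) ∩ ((K : Set G) * B)).Nonempty) :
    DoubleCoset.mk K L g ∈ DoubleCoset.mk K L '' (B * D⁻¹) := by
  obtain ⟨_, hgld, k, hk, b, hb, hkb⟩ := h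
  obtain ⟨_, ⟨l, hl, d, hd, rfl⟩, rfl⟩ := Set.mem_smul_set.mp hgld
  refine ⟨b * d⁻¹, Set.mul_mem_mul hb (Set.inv_mem_inv.mpr hd),
    (DoubleCoset.eq K L _ g).mpr ⟨k, hk, l⁻¹, L.inv_mem hl, ?_⟩⟩
  simp only [smul_eq_mul] at hkb
  rw [← mul_assoc, hkb]
  group

end Cosets

theorem finitely_many_crossing_double_cosets {G : Type*} [Group G] [Group.FG G]
    (L K : Subgroup G) (hL : L.FG) (hK : K.FG) (X Y : Set G)
    (hX : IsNontrivialAlmostInvariant L X) (hY : IsNontrivialAlmostInvariant K Y) :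
    (DoubleCoset.mk K L '' {g : G | Crosses K (g • X) Y}).Finite := by
  obtain ⟨S, hS, hSfin⟩ := Monoid.fg_iff.mp (Group.fg_iff_monoid_fg.mp ‹_›)
  obtain ⟨D₀, hD₀, hXD₀⟩ :=
    exists_finite_subset_mul_of_rproj_finite (rproj_cayleyBoundary_finite hSfin hX.1)
  obtain ⟨B₀, hB₀, hYB₀⟩ :=
    exists_finite_subset_mul_of_rproj_finite (rproj_cayleyBoundary_finite hSfin hY.1)
  obtain ⟨D, hD, hD₀D, hLD⟩ :=
    exists_finite_superset_isCayleyConnected_mul hS ((Subgroup.fg_iff_submonoid_fg L).mp hL) hD₀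
  obtain ⟨B, hB, hB₀B, hKB⟩ :=
    exists_finite_superset_isCayleyConnected_mul hS ((Subgroup.fg_iff_submonoid_fg K).mp hK) hB₀
  rw [Subgroup.coe_toSubmonoid] at hLD hKB
  refine ((hB.mul hD.inv).image (DoubleCoset.mk K L)).subset ?_
  rintro _ ⟨g, ⟨h₁, h₂, h₃, h₄⟩, rfl⟩
  refine doubleCoset_mk_mem_image_mul_inv <| inter_nonempty_of_corners_nonempty hS (hLD.smul g)
    hKB ?_ (hYB₀.trans (Set.mul_subset_mul_left hB₀B)) h₁.nonempty.of_image h₂.nonempty.of_image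
    h₃.nonempty.of_image h₄.nonempty.of_image
  rw [cayleyBoundary_smul]
  exact Set.smul_set_mono (hXD₀.trans (Set.mul_subset_mul_left hD₀D))
end

section
/- Let G be a finitely generated group with subgroups Λ and Σ, let X be a non-trivial Λ-almost invariant subset of G and Y a non-trivial Σ-almost invariant subset of G. Then the map induced by g ↦ g⁻¹, sending the double coset ΣgΛ to Λg⁻¹Σ, restricts to a bijection between the set of double cosets ΣgΛ such that gX crosses Y and the set of double cosets ΛhΣ such that hY crosses X. In particular these two sets of double cosets have the same cardinality (i(D,E) = i(E,D), where D = Λ\X and E = Σ\Y). -/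
/-!
If `gX ∩ Y` meets only finitely many cosets `Kb`, choose `y ∈ Y` with `Ky` outside them. For
`w ∈ X ∩ g⁻¹Y` with `Kgw = Kb`, the element `u = wb⁻¹` has `gu ∈ K`, so `u ∈ X` forces `uy ∉ X`
(otherwise `guy ∈ gX ∩ Y` would lie in `Ky`). Hence `w` lies in `(X \ Xy⁻¹)b` or in `X \ Xb`,
and almost invariance of `X` makes these finitely many cosets `Lw`. So `gX ∩ Y` is small in
`K\G` iff `X ∩ g⁻¹Y` is small in `L\G`; applied to complements, `gX` crosses `Y` iff `g⁻¹Y`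
crosses `X`, and `g ↦ g⁻¹` matches the two sets of double cosets.
-/

open scoped Pointwise symmDiff

section RightCosets

variable {G : Type*} [Group G] {H : Subgroup G}

abbrev rightCosetMk (H : Subgroup G) (x : G) : Quotient (QuotientGroup.rightRel H) :=
  Quotient.mk (QuotientGroup.rightRel H) x

theorem rightCosetMk_eq_iff {x y : G} : rightCosetMk H x = rightCosetMk H y ↔ y * x⁻¹ ∈ H :=
  Quotient.eq.trans QuotientGroup.rightRel_apply

theorem rightCosetMk_mul_of_mem {k : G} (hk : k ∈ H) (x : G) :
    rightCosetMk H (k * x) = rightCosetMk H x :=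
  rightCosetMk_eq_iff.mpr (by simpa [mul_assoc] using H.inv_mem hk)

def rightCosetMul (H : Subgroup G) (b : G) :
    Quotient (QuotientGroup.rightRel H) ≃ Quotient (QuotientGroup.rightRel H) :=
  Quotient.congr (Equiv.mulRight b) fun x y => by
    simp [QuotientGroup.rightRel_apply, mul_assoc]

theorem rightCosetMul_mk (b x : G) :
    rightCosetMul H b (rightCosetMk H x) = rightCosetMk H (x * b) := rfl

theorem rproj_image_mul_right (X : Set G) (b : G) :
    rproj H ((· * b) '' X) = rightCosetMul H b '' rproj H X := by
  simp only [rproj, Set.image_image]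
  rfl

theorem mem_rproj_iff {X : Set G} (hX : ∀ h ∈ H, h • X = X) {w : G} :
    rightCosetMk H w ∈ rproj H X ↔ w ∈ X := by
  refine ⟨?_, fun hw => ⟨w, hw, rfl⟩⟩
  rintro ⟨x, hx, hxw⟩
  have hwx : w * x⁻¹ ∈ H := rightCosetMk_eq_iff.mp hxw
  rw [← hX _ hwx]
  exact ⟨x, hx, by simp [smul_eq_mul, mul_assoc]⟩

theorem rproj_compl {X : Set G} (hX : ∀ h ∈ H, h • X = X) :
    rproj H Xᶜ = (rproj H X)ᶜ := by
  have hXc : ∀ h ∈ H, h • Xᶜ = Xᶜ := fun h hh => by rw [Set.smul_set_compl, hX h hh]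
  ext q
  induction q using Quotient.inductionOn with
  | h x => exact (mem_rproj_iff hXc).trans (mem_rproj_iff hX).not.symm

end RightCosets

section AlmostInvariant

variable {G : Type*} [Group G] {L K : Subgroup G} {X Y : Set G}

theorem IsAlmostInvariant.compl (hX : IsAlmostInvariant L X) : IsAlmostInvariant L Xᶜ := by
  refine ⟨fun h hh => by rw [Set.smul_set_compl, hX.1 h hh], fun b => ?_⟩
  rw [AlmostEqSets, rproj_image_mul_right, rproj_compl hX.1,
    (rightCosetMul L b).image_compl, compl_symmDiff_compl, ← rproj_image_mul_right]
  exact hX.2 b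

theorem IsNontrivialAlmostInvariant.compl (hX : IsNontrivialAlmostInvariant L X) :
    IsNontrivialAlmostInvariant L Xᶜ :=
  ⟨hX.1.compl, hX.2.2, by rw [compl_compl]; exact hX.2.1⟩

theorem IsAlmostInvariant.finite_rproj_diff_preimage_mul_right (hX : IsAlmostInvariant L X)
    (c : G) : (rproj L (X \ (· * c) ⁻¹' X)).Finite := by
  refine ((hX.2 c : Set.Finite _).image (rightCosetMul L c⁻¹)).subset ?_
  rintro _ ⟨u, ⟨huX, hucX⟩, rfl⟩
  refine ⟨rightCosetMk L (u * c),
    Or.inl ⟨⟨u * c, ⟨u, huX, rfl⟩, rfl⟩, (mem_rproj_iff hX.1).not.mpr hucX⟩, ?_⟩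
  rw [rightCosetMul_mk, mul_inv_cancel_right]

theorem inter_inv_smul_subset_biUnion (hY : ∀ k ∈ K, k • Y = Y) (g : G) {y : G}
    (hyY : y ∈ Y) (hy : rightCosetMk K y ∉ rproj K (g • X ∩ Y)) :
    X ∩ g⁻¹ • Y ⊆ ⋃ q ∈ rproj K (g • X ∩ Y),
      (· * q.out) '' (X \ (· * y) ⁻¹' X) ∪ (X \ (· * q.out⁻¹) ⁻¹' X) := by
  rintro w ⟨hwX, hwY⟩
  have hgwY : g * w ∈ Y := by simpa [Set.mem_smul_set_iff_inv_smul_mem] using hwY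
  set q := rightCosetMk K (g * w)
  have hq : q ∈ rproj K (g • X ∩ Y) := ⟨g * w, ⟨Set.smul_mem_smul_set hwX, hgwY⟩, rfl⟩
  have hgu : g * (w * q.out⁻¹) ∈ K := by
    simpa [mul_assoc] using rightCosetMk_eq_iff.mp (Quotient.out_eq q)
  refine Set.mem_biUnion hq ?_
  by_cases hu : w * q.out⁻¹ ∈ X
  · refine Or.inl ⟨w * q.out⁻¹, ⟨hu, fun huy => hy ?_⟩, inv_mul_cancel_right w _⟩
    have hguy : g * (w * q.out⁻¹) * y ∈ g • X ∩ Y :=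
      ⟨by simpa [mul_assoc] using Set.smul_mem_smul_set (a := g) (show _ ∈ X from huy),
        hY _ hgu ▸ Set.smul_mem_smul_set hyY⟩
    rw [← rightCosetMk_mul_of_mem hgu]
    exact ⟨_, hguy, rfl⟩
  · exact Or.inr ⟨hwX, hu⟩

theorem finite_rproj_inter_inv_smul_of_finite (hX : IsAlmostInvariant L X)
    (hY : ∀ k ∈ K, k • Y = Y) (hYinf : (rproj K Y).Infinite) {g : G}
    (hfin : (rproj K (g • X ∩ Y)).Finite) : (rproj L (X ∩ g⁻¹ • Y)).Finite := by
  obtain ⟨_, ⟨y, hyY, rfl⟩, hy⟩ := (hYinf.sdiff hfin).nonempty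
  refine Set.Finite.subset ?_ (Set.image_mono (inter_inv_smul_subset_biUnion hY g hyY hy))
  simp only [rproj, Set.image_iUnion₂, Set.image_union]
  refine hfin.biUnion fun q _ => Set.Finite.union ?_ (hX.finite_rproj_diff_preimage_mul_right _)
  rw [← rproj, rproj_image_mul_right]
  exact (hX.finite_rproj_diff_preimage_mul_right y).image _

theorem infinite_rproj_smul_inter_iff (hX : IsNontrivialAlmostInvariant L X)
    (hY : IsNontrivialAlmostInvariant K Y) (g : G) :
    (rproj K (g • X ∩ Y)).Infinite ↔ (rproj L (g⁻¹ • Y ∩ X)).Infinite := by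
  refine not_congr ⟨fun h => ?_, fun h => ?_⟩
  · rw [Set.inter_comm]
    exact finite_rproj_inter_inv_smul_of_finite hX.1 hY.1.1 hY.2.1 h
  · simpa [Set.inter_comm] using finite_rproj_inter_inv_smul_of_finite hY.1 hX.1.1 hX.2.1 h

theorem crosses_smul_iff_crosses_inv_smul (hX : IsNontrivialAlmostInvariant L X)
    (hY : IsNontrivialAlmostInvariant K Y) (g : G) :
    Crosses K (g • X) Y ↔ Crosses L (g⁻¹ • Y) X := by
  simp only [Crosses, ← Set.smul_set_compl, infinite_rproj_smul_inter_iff hX hY,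
    infinite_rproj_smul_inter_iff hX.compl hY, infinite_rproj_smul_inter_iff hX hY.compl,
    infinite_rproj_smul_inter_iff hX.compl hY.compl]
  tauto

end AlmostInvariant

theorem DoubleCoset.setoid_inv {G : Type*} [Group G] {H K : Subgroup G} {a b : G}
    (h : DoubleCoset.setoid H K a b) : DoubleCoset.setoid K H a⁻¹ b⁻¹ := by
  obtain ⟨k, hk, l, hl, rfl⟩ := DoubleCoset.rel_iff.mp h
  exact DoubleCoset.rel_iff.mpr ⟨l⁻¹, K.inv_mem hl, k⁻¹, H.inv_mem hk, by group⟩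

def DoubleCoset.quotientInvEquiv {G : Type*} [Group G] (K L : Subgroup G) :
    DoubleCoset.Quotient (K : Set G) (L : Set G) ≃ DoubleCoset.Quotient (L : Set G) (K : Set G) :=
  Quotient.congr (Equiv.inv G) fun _ _ =>
    ⟨DoubleCoset.setoid_inv, fun h => by simpa using DoubleCoset.setoid_inv h⟩

theorem inverse_induces_bijection_on_crossing_double_cosets_general
    {G : Type*} [Group G]
    (L K : Subgroup G) (X Y : Set G)
    (hX : IsNontrivialAlmostInvariant L X) (hY : IsNontrivialAlmostInvariant K Y) :
    ∃ φ : DoubleCoset.Quotient (K : Set G) (L : Set G) → DoubleCoset.Quotient (L : Set G) (K : Set G),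
      (∀ g : G, φ (DoubleCoset.mk K L g) = DoubleCoset.mk L K g⁻¹) ∧
      Set.BijOn φ (DoubleCoset.mk K L '' {g : G | Crosses K (g • X) Y})
        (DoubleCoset.mk L K '' {h : G | Crosses L (h • Y) X}) := by
  set φ := DoubleCoset.quotientInvEquiv K L
  have hφ : ∀ g : G, φ (DoubleCoset.mk K L g) = DoubleCoset.mk L K g⁻¹ := fun _ => rfl
  have hcross : {g : G | Crosses K (g • X) Y}⁻¹ = {h : G | Crosses L (h • Y) X} := by
    ext h
    simp [crosses_smul_iff_crosses_inv_smul hX hY]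
  have himage : φ '' (DoubleCoset.mk K L '' {g : G | Crosses K (g • X) Y}) =
      DoubleCoset.mk L K '' {h : G | Crosses L (h • Y) X} := by
    rw [Set.image_image, funext hφ, ← hcross, ← Set.image_inv_eq_inv, Set.image_image]
  exact ⟨φ, hφ, himage ▸ φ.injective.injOn.bijOn_image⟩

theorem inverse_induces_bijection_on_crossing_double_cosets
    {G : Type*} [Group G] [Group.FG G]
    (L K : Subgroup G) (X Y : Set G)
    (hX : IsNontrivialAlmostInvariant L X) (hY : IsNontrivialAlmostInvariant K Y) :
    ∃ φ : DoubleCoset.Quotient (K : Set G) (L : Set G) → DoubleCoset.Quotient (L : Set G) (K : Set G),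
      (∀ g : G, φ (DoubleCoset.mk K L g) = DoubleCoset.mk L K g⁻¹) ∧
      Set.BijOn φ (DoubleCoset.mk K L '' {g : G | Crosses K (g • X) Y})
        (DoubleCoset.mk L K '' {h : G | Crosses L (h • Y) X}) :=
  inverse_induces_bijection_on_crossing_double_cosets_general L K X Y hX hY
end

section
/- Suppose a group G acts on a tree T by automorphisms, without inversions and without fixing any vertex. Let e be an edge of T, let E denote the vertex set of one of the two components of T − e and E* the vertex set of the other, and let g ∈ G. Then e and ge are distinct and coherently oriented if and only if gE ⊊ E or gE* ⊊ E*. -/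
/-!
Write `T(a,b)` for the half-tree of the oriented edge `(a,b)`: the vertices that `T − ab` connects
to `b`. Then `E = T(u,v)`, `E* = T(v,u)` and `gE = T(gu,gv)`. For adjacent `a b` and `c d`, the
reduced path from `a` to `d` starts with `(a,b)` iff `d ∈ T(a,b)`, and ends with `(c,d)` iff
`a ∈ T(d,c) = T(c,d)ᶜ`; for distinct edges these two conditions together say exactly
`T(c,d) ⊊ T(a,b)`. Applied to `(u,v), (gu,gv)` and to `(v,u), (gv,gu)` this is the theorem.
-/

open scoped Pointwise

/-- Distinct oriented edges `(u,v)` and `(u',v')` of `T` are coherently oriented if the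
reduced path in `T` from `u` to `v'` traverses first the edge from `u` to `v` and
finally the edge from `u'` to `v'`. -/
def CoherentlyOriented {V : Type*} (T : SimpleGraph V) (u v u' v' : V) : Prop :=
  ∃ (p : T.Walk u v') (d₁ d₂ : T.Dart), p.IsPath ∧
    p.darts.head? = some d₁ ∧ d₁.toProd = (u, v) ∧
    p.darts.getLast? = some d₂ ∧ d₂.toProd = (u', v')

namespace SimpleGraph

variable {V : Type*} {G : SimpleGraph V} {a b c d x : V}

def halfTree (G : SimpleGraph V) (a b : V) : Set V :=
  {x | (G.deleteEdges {s(a, b)}).Reachable b x}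

lemma mem_halfTree_self : b ∈ G.halfTree a b := Reachable.refl _

lemma IsBridge.notMem_halfTree (hab : G.IsBridge s(a, b)) : a ∉ G.halfTree a b :=
  fun h ↦ isBridge_iff.mp hab h.symm

lemma Walk.reachable_deleteEdges_of_notMem_support (q : G.Walk c x) (ha : a ∉ q.support) :
    (G.deleteEdges {s(a, b)}).Reachable c x := by
  refine ⟨q.toDeleteEdges _ fun e he hmem ↦ ha ?_⟩
  rw [Set.mem_singleton_iff] at hmem
  subst hmem
  exact q.fst_mem_support_of_mem_edges he

lemma Walk.reachable_deleteEdges_left_or_right (w : G.Walk x a) :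
    (G.deleteEdges {s(a, b)}).Reachable a x ∨ (G.deleteEdges {s(a, b)}).Reachable b x := by
  induction w with
  | nil => exact Or.inl .rfl
  | @cons x y a hxy _ ih =>
    by_cases he : s(x, y) = s(a, b)
    · rcases Sym2.eq_iff.mp he with ⟨rfl, -⟩ | ⟨rfl, -⟩
      exacts [Or.inl .rfl, Or.inr .rfl]
    · have hxy' : (G.deleteEdges {s(a, b)}).Adj y x := (deleteEdges_adj ..).mpr
        ⟨hxy.symm, by rwa [Sym2.eq_swap (a := y), Set.mem_singleton_iff]⟩
      exact ih.imp (·.trans hxy'.reachable) (·.trans hxy'.reachable)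

lemma halfTree_swap_eq_compl (hG : G.Preconnected) (hab : G.IsBridge s(a, b)) :
    G.halfTree b a = (G.halfTree a b)ᶜ := by
  ext x
  rw [halfTree, Set.mem_ofPred_eq, Sym2.eq_swap, Set.mem_compl_iff]
  constructor
  · exact fun hax hbx ↦ hab.notMem_halfTree (hbx.trans hax.symm)
  · intro hx
    obtain ⟨w⟩ := hG x a
    exact w.reachable_deleteEdges_left_or_right.resolve_right hx

lemma halfTree_subset_of_mem_of_notMem (hd : d ∈ G.halfTree a b) (ha : a ∉ G.halfTree c d) :
    G.halfTree c d ⊆ G.halfTree a b := by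
  classical
  rintro x ⟨w⟩
  have haw : a ∉ w.support := fun h ↦ ha ⟨w.takeUntil a h⟩
  exact hd.trans ((w.reachable_deleteEdges_of_notMem_support haw).mono
    (deleteEdges_mono (deleteEdges_le _)))

lemma Iso.image_halfTree {V' : Type*} {G' : SimpleGraph V'} (φ : G ≃g G') (a b : V) :
    φ '' G.halfTree a b = G'.halfTree (φ a) (φ b) := by
  let ψ : G.deleteEdges {s(a, b)} ≃g G'.deleteEdges {s(φ a, φ b)} :=
    { φ.toEquiv with
      map_rel_iff' := by simp [φ.injective.eq_iff, φ.map_adj_iff] }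
  ext y
  rw [← φ.apply_symm_apply y, φ.injective.mem_set_image]
  exact ψ.reachable_iff.symm

lemma Walk.IsPath.mem_halfTree_iff_head_dart {p : G.Walk a x} (hp : p.IsPath)
    (hab : G.IsBridge s(a, b)) :
    x ∈ G.halfTree a b ↔ ∃ d : G.Dart, p.darts.head? = some d ∧ d.toProd = (a, b) := by
  cases p with
  | nil => simpa using hab.notMem_halfTree
  | @cons _ c _ hac q =>
    have hq : (G.deleteEdges {s(a, b)}).Reachable c x :=
      q.reachable_deleteEdges_of_notMem_support ((cons_isPath_iff hac q).mp hp).2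
    simp only [darts_cons, List.head?_cons, Option.some.injEq, exists_eq_left', Prod.mk.injEq,
      true_and]
    refine ⟨fun hx ↦ ?_, fun hcb ↦ hcb ▸ hq⟩
    by_contra hcb
    have hac' : (G.deleteEdges {s(a, b)}).Adj a c := by simp [hac, hcb, hac.ne']
    exact hab.notMem_halfTree (hx.trans (hac'.reachable.trans hq).symm)

lemma Walk.IsPath.mem_halfTree_iff_getLast_dart {p : G.Walk x a} (hp : p.IsPath)
    (hab : G.IsBridge s(a, b)) :
    x ∈ G.halfTree a b ↔ ∃ d : G.Dart, p.darts.getLast? = some d ∧ d.toProd = (b, a) := by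
  rw [hp.reverse.mem_halfTree_iff_head_dart hab, darts_reverse, List.head?_reverse,
    List.getLast?_map]
  simp [Option.map_eq_some_iff, Prod.swap_eq_iff_eq_swap]

lemma coherentlyOriented_iff {T : SimpleGraph V} (hT : T.IsTree) (hab : T.Adj a b)
    (hcd : T.Adj c d) :
    CoherentlyOriented T a b c d ↔ d ∈ T.halfTree a b ∧ a ∈ T.halfTree d c := by
  have hbridge := isAcyclic_iff_forall_adj_isBridge.mp hT.isAcyclic
  constructor
  · rintro ⟨p, d₁, d₂, hp, hd₁, hd₁', hd₂, hd₂'⟩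
    exact ⟨(hp.mem_halfTree_iff_head_dart (hbridge hab)).mpr ⟨d₁, hd₁, hd₁'⟩,
      (hp.mem_halfTree_iff_getLast_dart (hbridge hcd.symm)).mpr ⟨d₂, hd₂, hd₂'⟩⟩
  · rintro ⟨hd, ha⟩
    obtain ⟨p, hp⟩ := hT.connected.exists_isPath a d
    obtain ⟨d₁, hd₁, hd₁'⟩ := (hp.mem_halfTree_iff_head_dart (hbridge hab)).mp hd
    obtain ⟨d₂, hd₂, hd₂'⟩ := (hp.mem_halfTree_iff_getLast_dart (hbridge hcd.symm)).mp ha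
    exact ⟨p, d₁, d₂, hp, hd₁, hd₁', hd₂, hd₂'⟩

lemma halfTree_ssubset_iff {T : SimpleGraph V} (hT : T.IsTree) (hab : T.Adj a b)
    (hcd : T.Adj c d) :
    T.halfTree c d ⊂ T.halfTree a b ↔
      s(c, d) ≠ s(a, b) ∧ d ∈ T.halfTree a b ∧ a ∈ T.halfTree d c := by
  have hbridge := isAcyclic_iff_forall_adj_isBridge.mp hT.isAcyclic
  rw [halfTree_swap_eq_compl hT.connected.preconnected (hbridge hcd), Set.mem_compl_iff]
  constructor
  · rintro ⟨hsub, hnot⟩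
    have hd : d ∈ T.halfTree a b := hsub mem_halfTree_self
    refine ⟨fun he ↦ ?_, hd, fun ha ↦ (hbridge hab).notMem_halfTree (hsub ha)⟩
    rcases Sym2.eq_iff.mp he with ⟨rfl, rfl⟩ | ⟨-, rfl⟩
    exacts [hnot subset_rfl, (hbridge hab).notMem_halfTree hd]
  · rintro ⟨hne, hd, ha⟩
    refine ⟨halfTree_subset_of_mem_of_notMem hd ha,
      fun hsub ↦ (hbridge hcd).notMem_halfTree (hsub ?_)⟩
    have hdc : (T.deleteEdges {s(a, b)}).Adj d c :=
      (deleteEdges_adj ..).mpr ⟨hcd.symm, by rwa [Sym2.eq_swap (a := d), Set.mem_singleton_iff]⟩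
    exact hd.trans hdc.reachable

lemma halfTree_ssubset_iff_coherentlyOriented {T : SimpleGraph V} (hT : T.IsTree)
    (hab : T.Adj a b) (hcd : T.Adj c d) :
    T.halfTree c d ⊂ T.halfTree a b ↔ s(c, d) ≠ s(a, b) ∧ CoherentlyOriented T a b c d := by
  rw [halfTree_ssubset_iff hT hab hcd, coherentlyOriented_iff hT hab hcd]

end SimpleGraph

open SimpleGraph

theorem coherently_oriented_iff_strict_containment_general
    {V G : Type*} [Group G] [MulAction G V] (T : SimpleGraph V) (hT : T.IsTree)
    -- `G` acts on the tree `T` by automorphisms: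
    (hact : ∀ (g : G) (x y : V), T.Adj x y ↔ T.Adj (g • x) (g • y))
    -- `e` is the edge of `T` with endpoints `u` and `v`:
    (u v : V) (huv : T.Adj u v)
    -- `E` is the vertex set of the component of `T − e` containing `v`:
    (E : Set V) (hE : E = {x : V | (T.deleteEdges {s(u, v)}).Reachable v x})
    (g : G) :
    (s(g • u, g • v) ≠ s(u, v) ∧
      (CoherentlyOriented T u v (g • u) (g • v) ∨
        CoherentlyOriented T v u (g • v) (g • u))) ↔
      (g • E ⊂ E ∨ g • Eᶜ ⊂ Eᶜ) := by
  obtain rfl : E = T.halfTree u v := hE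
  let φ : T ≃g T := ⟨MulAction.toPerm g, (hact g _ _).symm⟩
  have smul_halfTree (a b : V) : g • T.halfTree a b = T.halfTree (g • a) (g • b) := by
    rw [← Set.image_smul]
    exact φ.image_halfTree a b
  have hguv : T.Adj (g • u) (g • v) := (hact g u v).mp huv
  rw [← halfTree_swap_eq_compl hT.connected.preconnected
      (isAcyclic_iff_forall_adj_isBridge.mp hT.isAcyclic huv),
    smul_halfTree, smul_halfTree, halfTree_ssubset_iff_coherentlyOriented hT huv hguv,
    halfTree_ssubset_iff_coherentlyOriented hT huv.symm hguv.symm, Sym2.eq_swap (a := g • v),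
    Sym2.eq_swap (a := v), and_or_left]

theorem coherently_oriented_iff_strict_containment
    {V G : Type*} [Group G] [MulAction G V] (T : SimpleGraph V) (hT : T.IsTree)
    -- `G` acts on the tree `T` by automorphisms:
    (hact : ∀ (g : G) (x y : V), T.Adj x y ↔ T.Adj (g • x) (g • y))
    -- the action is without inversions:
    (hni : ∀ (g : G) (x y : V), T.Adj x y → ¬(g • x = y ∧ g • y = x))
    -- no vertex is fixed by every element of `G`:
    (hnofix : ¬ ∃ x : V, ∀ g : G, g • x = x)
    -- `e` is the edge of `T` with endpoints `u` and `v`: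
    (u v : V) (huv : T.Adj u v)
    -- `E` is the vertex set of the component of `T − e` containing `v`:
    (E : Set V) (hE : E = {x : V | (T.deleteEdges {s(u, v)}).Reachable v x})
    (g : G) :
    (s(g • u, g • v) ≠ s(u, v) ∧
      (CoherentlyOriented T u v (g • u) (g • v) ∨
        CoherentlyOriented T v u (g • v) (g • u))) ↔
      (g • E ⊂ E ∨ g • Eᶜ ⊂ Eᶜ) :=
  coherently_oriented_iff_strict_containment_general T hT hact u v huv E hE g
end

section
/- Suppose a group G acts on a tree T by automorphisms, without inversions and without fixing any vertex, and suppose the action is transitive on the (unoriented) edges of T. Let e be an edge of T, let E denote the vertex set of one of the two components of T − e, and let Y = {k ∈ G : both endpoints of the edge ke lie in E}, with Y* = G − Y. Then for every g ∈ G: gY ⊆ Y if and only if gE ⊆ E, and gY* ⊆ Y* if and only if gE* ⊆ E*. -/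
/-!
Every vertex `x ∈ E` lies on an edge with both endpoints in `E`, and by edge-transitivity that
edge is `k • e` for some `k ∈ Y`; so `E` is the union of the translates `k • {u, v}`, `k ∈ Y`, and
`g` maps this union into itself exactly when it maps the index set `Y` into itself. The only
vertex that might lie on no such edge is `v` itself, when `v` is a leaf. That cannot happen: every
edge would then have a leaf endpoint, so `T` would be a star about `u`, and `u` would be fixed by
`G` unless some `g` swapped `u` and `v`.
-/

open scoped Pointwise

section CoveringTranslates

variable {G V : Type*} [Group G] [MulAction G V]

theorem Set.smul_compl_subset_compl_iff (g : G) (s : Set V) :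
    g • sᶜ ⊆ sᶜ ↔ g⁻¹ • s ⊆ s := by
  rw [Set.smul_set_compl, Set.compl_subset_compl, Set.subset_smul_set_iff]

theorem smul_setOf_smul_subset_subset_iff {S E : Set V}
    (hcover : ∀ x ∈ E, ∃ k : G, k • S ⊆ E ∧ x ∈ k • S) (g : G) :
    g • {k : G | k • S ⊆ E} ⊆ {k | k • S ⊆ E} ↔ g • E ⊆ E := by
  constructor
  · rintro hY _ ⟨x, hx, rfl⟩
    obtain ⟨k, hkS, hxk⟩ := hcover x hx
    have hgk : (g * k) • S ⊆ E := hY (Set.smul_mem_smul_set (a := g) hkS)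
    exact hgk (by rw [mul_smul]; exact Set.smul_mem_smul_set hxk)
  · rintro hE _ ⟨k, hkS, rfl⟩
    change (g * k) • S ⊆ E
    rw [mul_smul]
    exact (Set.smul_set_mono hkS).trans hE

end CoveringTranslates

namespace SimpleGraph

variable {V : Type*} {H : SimpleGraph V}

theorem Reachable.exists_adj_reachable_of_ne {v x : V} (h : H.Reachable v x) (hne : x ≠ v) :
    ∃ y, H.Adj x y ∧ H.Reachable v y := by
  obtain ⟨p⟩ := h.symm
  exact ⟨p.snd, p.adj_snd (Walk.not_nil_of_ne hne), ⟨p.tail.reverse⟩⟩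

theorem Reachable.exists_adj_reachable_deleteEdges {u v w x : V} (hvw : H.Adj v w) (hwu : w ≠ u)
    (hx : (H.deleteEdges {s(u, v)}).Reachable v x) :
    ∃ y, H.Adj x y ∧ (H.deleteEdges {s(u, v)}).Reachable v y := by
  by_cases hxv : x = v
  · subst hxv
    refine ⟨w, hvw, Adj.reachable ?_⟩
    simp [hvw, hwu, hvw.ne']
  · obtain ⟨y, hxy, hy⟩ := hx.exists_adj_reachable_of_ne hxv
    exact ⟨y, (deleteEdges_adj.1 hxy).1, hy⟩

end SimpleGraph

section EdgeTransitiveAction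

variable {V G : Type*} [Group G] [MulAction G V] {T : SimpleGraph V} {u v : V}

theorem exists_smul_pair_eq_of_adj
    (htrans : ∀ x y : V, T.Adj x y → ∃ g : G, s(g • u, g • v) = s(x, y))
    {x y : V} (hxy : T.Adj x y) : ∃ k : G, k • ({u, v} : Set V) = {x, y} := by
  obtain ⟨k, hk⟩ := htrans x y hxy
  refine ⟨k, ?_⟩
  rw [Set.smul_set_insert, Set.smul_set_singleton]
  rcases Sym2.eq_iff.1 hk with ⟨rfl, rfl⟩ | ⟨rfl, rfl⟩
  · rfl
  · exact Set.pair_comm _ _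

theorem eq_of_adj_smul_of_leaf (hact : ∀ (g : G) (x y : V), T.Adj x y ↔ T.Adj (g • x) (g • y))
    (hleaf : ∀ z, T.Adj v z → z = u) (g : G) {z : V} (hz : T.Adj (g • v) z) : z = g • u := by
  rw [← smul_inv_smul g z, ← hact] at hz
  rw [← hleaf _ hz, smul_inv_smul]

theorem eq_of_adj_of_adj_of_leaf
    (hact : ∀ (g : G) (x y : V), T.Adj x y ↔ T.Adj (g • x) (g • y)) (huv : T.Adj u v)
    (htrans : ∀ x y : V, T.Adj x y → ∃ g : G, s(g • u, g • v) = s(x, y))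
    (hleaf : ∀ z, T.Adj v z → z = u) {x y : V} (huy : T.Adj u y) (hyx : T.Adj y x) : x = u := by
  obtain ⟨k, hk⟩ := htrans u y huy
  rcases Sym2.eq_iff.1 hk with ⟨hku, hkv⟩ | ⟨hkv, hku⟩
  · rw [← hku]
    exact eq_of_adj_smul_of_leaf hact hleaf k (hkv ▸ hyx)
  · -- here `u = k • v` is a leaf too, so its neighbour `v` is `y`
    have hvy : v = y := by
      rw [← hkv]
      exact eq_of_adj_smul_of_leaf hact hleaf k (hku ▸ huv)
    exact hleaf x (hvy ▸ hyx)

theorem eq_or_adj_of_leaf (hconn : T.Connected)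
    (hact : ∀ (g : G) (x y : V), T.Adj x y ↔ T.Adj (g • x) (g • y)) (huv : T.Adj u v)
    (htrans : ∀ x y : V, T.Adj x y → ∃ g : G, s(g • u, g • v) = s(x, y))
    (hleaf : ∀ z, T.Adj v z → z = u) (x : V) : x = u ∨ T.Adj u x := by
  obtain ⟨p⟩ := hconn.preconnected x u
  induction p with
  | nil => exact .inl rfl
  | cons hxy _ ih =>
    rcases ih huv htrans hleaf with rfl | huy
    · exact .inr hxy.symm
    · exact .inl (eq_of_adj_of_adj_of_leaf hact huv htrans hleaf huy hxy.symm)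

theorem smul_eq_of_leaf (hconn : T.Connected)
    (hact : ∀ (g : G) (x y : V), T.Adj x y ↔ T.Adj (g • x) (g • y))
    (hni : ∀ (g : G) (x y : V), T.Adj x y → ¬(g • x = y ∧ g • y = x)) (huv : T.Adj u v)
    (htrans : ∀ x y : V, T.Adj x y → ∃ g : G, s(g • u, g • v) = s(x, y))
    (hleaf : ∀ z, T.Adj v z → z = u) (g : G) : g • u = u := by
  refine (eq_or_adj_of_leaf hconn hact huv htrans hleaf (g • u)).resolve_right fun hu => ?_
  have hgv : g • v = u :=
    eq_of_adj_of_adj_of_leaf hact huv htrans hleaf hu ((hact g u v).1 huv)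
  have hgu : v = g • u := eq_of_adj_smul_of_leaf hact hleaf g (hgv ▸ huv)
  exact hni g u v huv ⟨hgu.symm, hgv⟩

end EdgeTransitiveAction

theorem translate_subset_iff
    {V G : Type*} [Group G] [MulAction G V] (T : SimpleGraph V) (hT : T.IsTree)
    -- `G` acts on the tree `T` by automorphisms:
    (hact : ∀ (g : G) (x y : V), T.Adj x y ↔ T.Adj (g • x) (g • y))
    -- the action is without inversions:
    (hni : ∀ (g : G) (x y : V), T.Adj x y → ¬(g • x = y ∧ g • y = x))
    -- no vertex is fixed by every element of `G`:
    (hnofix : ¬ ∃ x : V, ∀ g : G, g • x = x)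
    -- `e` is the edge of `T` with endpoints `u` and `v`:
    (u v : V) (huv : T.Adj u v)
    -- the action is transitive on the (unoriented) edges of `T`:
    (htrans : ∀ x y : V, T.Adj x y → ∃ g : G, s(g • u, g • v) = s(x, y))
    -- `E` is the vertex set of the component of `T − e` containing `v`:
    (E : Set V) (hE : E = {x : V | (T.deleteEdges {s(u, v)}).Reachable v x})
    -- `Y = {k ∈ G : both endpoints of ke lie in E}`, and `Y* = G − Y = Yᶜ`:
    (Y : Set G) (hY : Y = {k : G | k • u ∈ E ∧ k • v ∈ E})
    (g : G) :
    (g • Y ⊆ Y ↔ g • E ⊆ E) ∧ (g • Yᶜ ⊆ Yᶜ ↔ g • Eᶜ ⊆ Eᶜ) := by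
  obtain ⟨w, hvw, hwu⟩ : ∃ w, T.Adj v w ∧ w ≠ u := by
    by_contra! hleaf
    exact hnofix ⟨u, smul_eq_of_leaf hT.connected hact hni huv htrans hleaf⟩
  have hcover : ∀ x ∈ E, ∃ k : G, k • ({u, v} : Set V) ⊆ E ∧ x ∈ k • ({u, v} : Set V) := by
    intro x hx
    obtain ⟨y, hxy, hy⟩ : ∃ y, T.Adj x y ∧ y ∈ E := by
      subst hE
      exact hx.exists_adj_reachable_deleteEdges hvw hwu
    obtain ⟨k, hk⟩ := exists_smul_pair_eq_of_adj htrans hxy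
    exact ⟨k, hk ▸ Set.pair_subset hx hy, hk ▸ Set.mem_insert x _⟩
  have hY' : Y = {k : G | k • ({u, v} : Set V) ⊆ E} := by
    simp only [hY, Set.smul_set_insert, Set.smul_set_singleton, Set.pair_subset_iff]
  rw [hY', Set.smul_compl_subset_compl_iff, Set.smul_compl_subset_compl_iff]
  exact ⟨smul_setOf_smul_subset_subset_iff hcover g, smul_setOf_smul_subset_subset_iff hcover g⁻¹⟩
end

section
/- Suppose a group G acts on a tree T by automorphisms, without inversions and without fixing any vertex, and suppose the action is transitive on the (unoriented) edges of T. Let e be an edge of T, let E denote the vertex set of one of the two components of T − e, and let Y = {k ∈ G : both endpoints of the edge ke lie in E}, with Y* = G − Y. Then for every g ∈ G: gY = Y if and only if gE = E, and gY* = Y* if and only if gE* = E*. -/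
/-!
Every edge is a translate of `e = {u, v}`, so as soon as each vertex of `E` has a neighbour in `E`,
`E` is the union `Y • {u, v}` of the translates of `e` lying in `E`; then `g • Y = Y` gives
`g • E = (g • Y) • {u, v} = E`, and the converse is immediate from the definition of `Y`.
Each vertex of `E` has a neighbour in `E` unless `v` is a leaf hanging on `u`. In that case every
edge, being a translate of `e`, has a leaf endpoint, so `T` is a star centred at `u` (possibly the
single edge `e`, on which no inversions are allowed), and `u` would be fixed by all of `G`.
-/

open scoped Pointwise

namespace SimpleGraph

variable {V : Type*} {T : SimpleGraph V}

lemma Preconnected.eq_or_adj_of_forall_neighborSet_subset (hT : T.Preconnected) {c : V}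
    (hc : ∀ w, T.Adj c w → T.neighborSet w ⊆ {c}) (x : V) : x = c ∨ T.Adj c x := by
  obtain ⟨p⟩ := hT c x
  suffices ∀ {a b : V}, T.Walk a b → (a = c ∨ T.Adj c a) → b = c ∨ T.Adj c b from
    this p (Or.inl rfl)
  intro a b q
  induction q with
  | nil => exact id
  | cons hab _ ih =>
    rintro (rfl | hca)
    · exact ih (Or.inr hab)
    · exact ih (Or.inl (hc _ hca hab))

lemma Reachable.exists_adj_reachable {v w x : V} (hvw : T.Adj v w) (hx : T.Reachable v x) :
    ∃ y, T.Adj x y ∧ T.Reachable v y := by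
  obtain ⟨q⟩ := hx.symm
  cases q with
  | nil => exact ⟨w, hvw, hvw.reachable⟩
  | cons hxy q => exact ⟨_, hxy, q.reachable.symm⟩

end SimpleGraph

open SimpleGraph

section Action

variable {V G : Type*} [Group G] [MulAction G V] {T : SimpleGraph V}

lemma neighborSet_smul_subset_singleton
    (hact : ∀ (g : G) (x y : V), T.Adj x y ↔ T.Adj (g • x) (g • y)) {u v : V}
    (hv : T.neighborSet v ⊆ {u}) (k : G) : T.neighborSet (k • v) ⊆ {k • u} := by
  intro w hw
  have : T.Adj v (k⁻¹ • w) := by rwa [hact k, smul_inv_smul]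
  rw [Set.mem_singleton_iff, ← hv this, smul_inv_smul]

lemma smul_eq_self_of_neighborSet_subset (hT : T.Preconnected)
    (hact : ∀ (g : G) (x y : V), T.Adj x y ↔ T.Adj (g • x) (g • y))
    (hni : ∀ (g : G) (x y : V), T.Adj x y → ¬(g • x = y ∧ g • y = x))
    {u v : V} (huv : T.Adj u v)
    (htrans : ∀ x y : V, T.Adj x y → ∃ g : G, s(g • u, g • v) = s(x, y))
    (hv : T.neighborSet v ⊆ {u}) (k : G) : k • u = u := by
  have hleaf : ∀ x y, T.Adj x y → T.neighborSet x ⊆ {y} ∨ T.neighborSet y ⊆ {x} := by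
    intro x y hxy
    obtain ⟨g, hg⟩ := htrans x y hxy
    rcases Sym2.eq_iff.mp hg with ⟨rfl, rfl⟩ | ⟨rfl, rfl⟩
    · exact Or.inr (neighborSet_smul_subset_singleton hact hv g)
    · exact Or.inl (neighborSet_smul_subset_singleton hact hv g)
  have hstar : ∀ w, T.Adj u w → T.neighborSet w ⊆ {u} := by
    intro w huw
    rcases hleaf u w huw with hu | hw
    · rwa [← show v = w from hu huv]
    · exact hw
  rcases hT.eq_or_adj_of_forall_neighborSet_subset hstar (k • u) with hku | hadj
  · exact hku
  exfalso
  have hku : T.neighborSet (k • u) ⊆ {u} := hstar _ hadj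
  have hkv : k • v = u := hku ((hact k u v).mp huv)
  have hu : T.neighborSet u ⊆ {v} := by
    have := neighborSet_smul_subset_singleton hact hku k⁻¹
    rwa [inv_smul_smul, inv_smul_eq_iff.mpr hkv.symm] at this
  exact hni k u v huv ⟨hu hadj, hkv⟩

lemma exists_adj_ne_of_forall_not_fixed (hT : T.Preconnected)
    (hact : ∀ (g : G) (x y : V), T.Adj x y ↔ T.Adj (g • x) (g • y))
    (hni : ∀ (g : G) (x y : V), T.Adj x y → ¬(g • x = y ∧ g • y = x))
    (hnofix : ¬ ∃ x : V, ∀ g : G, g • x = x) {u v : V} (huv : T.Adj u v)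
    (htrans : ∀ x y : V, T.Adj x y → ∃ g : G, s(g • u, g • v) = s(x, y)) :
    ∃ w, T.Adj v w ∧ w ≠ u := by
  by_contra! hv
  exact hnofix ⟨u, smul_eq_self_of_neighborSet_subset hT hact hni huv htrans hv⟩

lemma eq_setOf_smul_mem_smul_pair {u v : V}
    (htrans : ∀ x y : V, T.Adj x y → ∃ g : G, s(g • u, g • v) = s(x, y))
    {E : Set V} (hE : ∀ x ∈ E, ∃ y ∈ E, T.Adj x y) :
    E = {k : G | k • u ∈ E ∧ k • v ∈ E} • {u, v} := by
  ext x
  simp only [Set.mem_smul, Set.mem_ofPred_eq, Set.mem_insert_iff, Set.mem_singleton_iff]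
  constructor
  · intro hx
    obtain ⟨y, hy, hxy⟩ := hE x hx
    obtain ⟨k, hk⟩ := htrans x y hxy
    rcases Sym2.eq_iff.mp hk with ⟨hu, hv⟩ | ⟨hu, hv⟩
    · exact ⟨k, ⟨hu ▸ hx, hv ▸ hy⟩, u, Or.inl rfl, hu⟩
    · exact ⟨k, ⟨hu ▸ hy, hv ▸ hx⟩, v, Or.inr rfl, hv⟩
  · rintro ⟨k, ⟨hu, hv⟩, s, rfl | rfl, rfl⟩
    exacts [hu, hv]

lemma smul_setOf_smul_mem_and (g : G) (E : Set V) (u v : V) :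
    g • {k : G | k • u ∈ E ∧ k • v ∈ E} = {k | k • u ∈ g • E ∧ k • v ∈ g • E} := by
  ext k
  simp only [Set.mem_smul_set_iff_inv_smul_mem, Set.mem_ofPred_eq, smul_eq_mul, mul_smul]

end Action

theorem translate_eq_iff
    {V G : Type*} [Group G] [MulAction G V] (T : SimpleGraph V) (hT : T.IsTree)
    -- `G` acts on the tree `T` by automorphisms:
    (hact : ∀ (g : G) (x y : V), T.Adj x y ↔ T.Adj (g • x) (g • y))
    -- the action is without inversions:
    (hni : ∀ (g : G) (x y : V), T.Adj x y → ¬(g • x = y ∧ g • y = x))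
    -- no vertex is fixed by every element of `G`:
    (hnofix : ¬ ∃ x : V, ∀ g : G, g • x = x)
    -- `e` is the edge of `T` with endpoints `u` and `v`:
    (u v : V) (huv : T.Adj u v)
    -- the action is transitive on the (unoriented) edges of `T`:
    (htrans : ∀ x y : V, T.Adj x y → ∃ g : G, s(g • u, g • v) = s(x, y))
    -- `E` is the vertex set of the component of `T − e` containing `v`:
    (E : Set V) (hE : E = {x : V | (T.deleteEdges {s(u, v)}).Reachable v x})
    -- `Y = {k ∈ G : both endpoints of ke lie in E}`, and `Y* = G − Y = Yᶜ`:
    (Y : Set G) (hY : Y = {k : G | k • u ∈ E ∧ k • v ∈ E})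
    (g : G) :
    (g • Y = Y ↔ g • E = E) ∧ (g • Yᶜ = Yᶜ ↔ g • Eᶜ = Eᶜ) := by
  obtain ⟨w, hvw, hwu⟩ :=
    exists_adj_ne_of_forall_not_fixed hT.1.preconnected hact hni hnofix huv htrans
  have hvw_del : (T.deleteEdges {s(u, v)}).Adj v w := by
    simp [hvw, hwu, huv.ne.symm]
  have hE_adj : ∀ x ∈ E, ∃ y ∈ E, T.Adj x y := by
    intro x hx
    rw [hE] at hx ⊢
    obtain ⟨y, hxy, hy⟩ := hx.exists_adj_reachable hvw_del
    exact ⟨y, hy, hxy.1⟩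
  have hEY : E = Y • {u, v} := hY ▸ eq_setOf_smul_mem_smul_pair htrans hE_adj
  have key : g • Y = Y ↔ g • E = E := by
    constructor
    · intro hgY
      rw [hEY, ← smul_assoc, hgY]
    · intro hgE
      rw [hY, smul_setOf_smul_mem_and, hgE]
  rwa [Set.smul_set_compl, Set.smul_set_compl, compl_inj_iff, compl_inj_iff, and_self]
end

section
/- Suppose a group G acts on a tree T by automorphisms, without inversions and without fixing any vertex, and suppose the action is transitive on the (unoriented) edges of T. Let e be an edge of T, let E denote the vertex set of one of the two components of T − e, and let Y = {k ∈ G : both endpoints of the edge ke lie in E}, with Y* = G − Y. Then for every g ∈ G: gY ⊊ Y if and only if gE ⊊ E, and gY* ⊊ Y* if and only if gE* ⊊ E*. -/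
/-!
Statement 11: in the edge-transitive tree setting, `gY ⊊ Y` iff `gE ⊊ E`, and `gY* ⊊ Y*` iff `gE* ⊊ E*`.
-/

open scoped Pointwise

theorem translate_ssubset_iff
    {V G : Type*} [Group G] [MulAction G V] (T : SimpleGraph V) (hT : T.IsTree)
    -- `G` acts on the tree `T` by automorphisms:
    (hact : ∀ (g : G) (x y : V), T.Adj x y ↔ T.Adj (g • x) (g • y))
    -- the action is without inversions:
    (hni : ∀ (g : G) (x y : V), T.Adj x y → ¬(g • x = y ∧ g • y = x))
    -- no vertex is fixed by every element of `G`: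
    (hnofix : ¬ ∃ x : V, ∀ g : G, g • x = x)
    -- `e` is the edge of `T` with endpoints `u` and `v`:
    (u v : V) (huv : T.Adj u v)
    -- the action is transitive on the (unoriented) edges of `T`:
    (htrans : ∀ x y : V, T.Adj x y → ∃ g : G, s(g • u, g • v) = s(x, y))
    -- `E` is the vertex set of the component of `T − e` containing `v`:
    (E : Set V) (hE : E = {x : V | (T.deleteEdges {s(u, v)}).Reachable v x})
    -- `Y = {k ∈ G : both endpoints of ke lie in E}`, and `Y* = G − Y = Yᶜ`:
    (Y : Set G) (hY : Y = {k : G | k • u ∈ E ∧ k • v ∈ E})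
    (g : G) :
    (g • Y ⊂ Y ↔ g • E ⊂ E) ∧ (g • Yᶜ ⊂ Yᶜ ↔ g • Eᶜ ⊂ Eᶜ) := by
  have hvE : v ∈ E := by rw [hE]; exact SimpleGraph.Reachable.refl v
  -- every vertex of E lies on a T-edge inside E, provided E is not a singleton
  have edgeInE : (∃ z ∈ E, z ≠ v) → ∀ x ∈ E, ∃ y ∈ E, T.Adj x y := by
    rintro ⟨z, hz, hzv⟩ x hx
    by_cases hxv : x = v
    · subst hxv
      rw [hE] at hz
      obtain ⟨w⟩ := hz
      obtain ⟨y, h, q, rfl⟩ := (SimpleGraph.Walk.not_nil_iff (p := w)).1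
        (SimpleGraph.Walk.not_nil_of_ne (p := w) (Ne.symm hzv))
      refine ⟨y, ?_, (SimpleGraph.deleteEdges_adj.1 h).1⟩
      rw [hE]; exact h.reachable
    · rw [hE] at hx
      obtain ⟨w⟩ := (hx : (T.deleteEdges {s(u, v)}).Reachable v x).symm
      obtain ⟨y, h, q, rfl⟩ := (SimpleGraph.Walk.not_nil_iff (p := w)).1
        (SimpleGraph.Walk.not_nil_of_ne (p := w) hxv)
      refine ⟨y, ?_, (SimpleGraph.deleteEdges_adj.1 h).1⟩
      rw [hE]; exact ⟨q.reverse⟩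
  -- lemma A
  have lemA : ∀ h : G, h • E ⊆ E → h • Y ⊆ Y := by
    intro h hEs k' hk'
    obtain ⟨k, hk, rfl⟩ := hk'
    rw [hY] at hk ⊢
    have h1 : (h • k) • u ∈ E := by
      rw [smul_eq_mul, mul_smul]
      exact hEs (Set.smul_mem_smul_set hk.1)
    have h2 : (h • k) • v ∈ E := by
      rw [smul_eq_mul, mul_smul]
      exact hEs (Set.smul_mem_smul_set hk.2)
    exact ⟨h1, h2⟩
  -- lemma C
  have lemC : (∃ z ∈ E, z ≠ v) → ∀ h : G, h • Y ⊆ Y → h • E ⊆ E := by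
    intro hns h hYs a ha
    obtain ⟨x, hx, rfl⟩ := ha
    obtain ⟨y, hyE, hadj⟩ := edgeInE hns x hx
    obtain ⟨k, hk⟩ := htrans x y hadj
    rw [Sym2.eq_iff] at hk
    have hkY : k ∈ Y := by
      rw [hY]
      rcases hk with ⟨h1, h2⟩ | ⟨h1, h2⟩
      · exact ⟨h1 ▸ hx, h2 ▸ hyE⟩
      · exact ⟨h1 ▸ hyE, h2 ▸ hx⟩
    have hmem : h * k ∈ Y := hYs ⟨k, hkY, rfl⟩
    rw [hY] at hmem
    rcases hk with ⟨h1, h2⟩ | ⟨h1, h2⟩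
    · have := hmem.1; rw [mul_smul, h1] at this; exact this
    · have := hmem.2; rw [mul_smul, h2] at this; exact this
  -- the main iff
  have main : ∀ h : G, h • Y ⊂ Y ↔ h • E ⊂ E := by
    intro h
    by_cases hns : ∃ z ∈ E, z ≠ v
    · constructor
      · rintro ⟨h1, h2⟩
        refine ⟨lemC hns h h1, fun hc => h2 ?_⟩
        have : h⁻¹ • E ⊆ E := by
          have := Set.smul_set_mono (a := h⁻¹) hc
          rwa [inv_smul_smul] at this
        have := Set.smul_set_mono (a := h) (lemA h⁻¹ this)
        rwa [smul_inv_smul] at this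
      · rintro ⟨h1, h2⟩
        refine ⟨lemA h h1, fun hc => h2 ?_⟩
        have : h⁻¹ • Y ⊆ Y := by
          have := Set.smul_set_mono (a := h⁻¹) hc
          rwa [inv_smul_smul] at this
        have := Set.smul_set_mono (a := h) (lemC hns h⁻¹ this)
        rwa [smul_inv_smul] at this
    · push_neg at hns
      have hEv : E = {v} := Set.eq_singleton_iff_unique_mem.2 ⟨hvE, fun z hz => hns z hz⟩
      have hYe : Y = ∅ := by
        rw [hY]
        ext k
        simp only [Set.mem_setOf_eq, Set.mem_empty_iff_false, iff_false, not_and]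
        intro h1 h2
        rw [hEv] at h1 h2
        have : k • u = k • v := by
          rw [Set.mem_singleton_iff.1 h1, Set.mem_singleton_iff.1 h2]
        exact huv.ne (smul_left_cancel k this)
      constructor
      · rintro ⟨h1, h2⟩
        exact absurd (by rw [hYe, Set.smul_set_empty]) h2
      · rintro ⟨h1, h2⟩
        rw [hEv, Set.smul_set_singleton] at h1 h2
        have hvv : h • v = v := Set.singleton_subset_singleton.1 h1
        exact absurd (by rw [hvv]) h2
  -- assemble; compl lemmas
  have cssV : ∀ s t : Set V, sᶜ ⊂ tᶜ ↔ t ⊂ s := by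
    intro s t
    rw [Set.ssubset_def, Set.ssubset_def, Set.compl_subset_compl, Set.compl_subset_compl]
  have cssG : ∀ s t : Set G, sᶜ ⊂ tᶜ ↔ t ⊂ s := by
    intro s t
    rw [Set.ssubset_def, Set.ssubset_def, Set.compl_subset_compl, Set.compl_subset_compl]
  have smulss : ∀ (s t : Set V) (h : G), h • s ⊂ h • t ↔ s ⊂ t := by
    intro s t h
    rw [Set.ssubset_def, Set.ssubset_def]
    constructor
    · rintro ⟨h1, h2⟩
      constructor
      · have := Set.smul_set_mono (a := h⁻¹) h1
        rwa [inv_smul_smul, inv_smul_smul] at this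
      · intro hc; exact h2 (Set.smul_set_mono hc)
    · rintro ⟨h1, h2⟩
      refine ⟨Set.smul_set_mono h1, fun hc => h2 ?_⟩
      have := Set.smul_set_mono (a := h⁻¹) hc
      rwa [inv_smul_smul, inv_smul_smul] at this
  have smulssG : ∀ (s t : Set G) (h : G), h • s ⊂ h • t ↔ s ⊂ t := by
    intro s t h
    rw [Set.ssubset_def, Set.ssubset_def]
    constructor
    · rintro ⟨h1, h2⟩
      constructor
      · have := Set.smul_set_mono (a := h⁻¹) h1
        rwa [inv_smul_smul, inv_smul_smul] at this
      · intro hc; exact h2 (Set.smul_set_mono hc)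
    · rintro ⟨h1, h2⟩
      refine ⟨Set.smul_set_mono h1, fun hc => h2 ?_⟩
      have := Set.smul_set_mono (a := h⁻¹) hc
      rwa [inv_smul_smul, inv_smul_smul] at this
  refine ⟨main g, ?_⟩
  rw [Set.smul_set_compl, Set.smul_set_compl, cssG, cssV]
  constructor
  · intro h1
    have h2 : g⁻¹ • Y ⊂ Y := by
      have := (smulssG Y (g • Y) g⁻¹).2 h1
      rwa [inv_smul_smul] at this
    have h3 := (main g⁻¹).1 h2
    have := (smulss (g⁻¹ • E) E g).2 h3
    rwa [smul_inv_smul] at this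
  · intro h1
    have h2 : g⁻¹ • E ⊂ E := by
      have := (smulss E (g • E) g⁻¹).2 h1
      rwa [inv_smul_smul] at this
    have h3 := (main g⁻¹).2 h2
    have := (smulssG (g⁻¹ • Y) Y g).2 h3
    rwa [smul_inv_smul] at this
end

section
/- Let G = A ∗_Λ B be an amalgamated free product with Λ a proper subgroup of both A and B, and let X be the set of elements of G whose normal form a₁b₁⋯aₙbₙλ has a₁ non-trivial. Suppose λ₀ ∈ G satisfies λ₀X ⊊ X. Then the normal form of λ₀ begins with a non-trivial element of T∖{e} (i.e. λ₀ ∈ X) and ends with a non-trivial element of T′∖{e} (i.e. bₙ is non-trivial in its normal form), and for every g ∈ G there exists N such that λ₀ⁿ g ∈ X for all n ≥ N. -/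
open scoped Pointwise symmDiff

/-- `T` is a right transversal for `Λ` in `A` containing `1`: `T ⊆ A`, `1 ∈ T`, and each
coset `aΛ` (`a ∈ A`) contains exactly one element of `T`. -/
def IsRightTransversalOf {G : Type*} [Group G] (Lam A : Subgroup G) (T : Set G) : Prop :=
  T ⊆ (A : Set G) ∧ (1 : G) ∈ T ∧ ∀ a ∈ A, ∃! t, t ∈ T ∧ t⁻¹ * a ∈ Lam

/-- `l` is a normal word with respect to the transversals `T` (for `Λ` in `A`) and `T'`
(for `Λ` in `B`): a list of non-identity letters alternating between `T` and `T'`.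
Such a list, followed by an element `λ ∈ Λ`, is the normal form `a₁b₁⋯aₙbₙλ` (where `a₁`,
resp. `bₙ`, may be trivial, i.e. absent). -/
def IsNormalWord {G : Type*} [Group G] (T T' : Set G) (l : List G) : Prop :=
  (∀ x ∈ l, x ≠ 1 ∧ (x ∈ T ∨ x ∈ T')) ∧
    l.Chain' fun x y => (x ∈ T ∧ y ∈ T') ∨ (x ∈ T' ∧ y ∈ T)

/-- Every element of `G` is expressible uniquely in the normal form `a₁b₁⋯aₙbₙλ`.
Together with `IsRightTransversalOf` hypotheses and `Λ = A ⊓ B`, this encodes that `G` is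
the amalgamated free product `A ∗_Λ B`. -/
def HasUniqueNormalForms {G : Type*} [Group G] (Lam : Subgroup G) (T T' : Set G) : Prop :=
  ∀ g : G, ∃! p : List G × G,
    IsNormalWord T T' p.1 ∧ p.2 ∈ Lam ∧ g = p.1.prod * p.2

/-- The set `X` of elements of `G` whose normal form `a₁b₁⋯aₙbₙλ` has `a₁` non-trivial,
i.e. whose normal word is nonempty and begins with a letter of `T`. -/
def amalgX {G : Type*} [Group G] (Lam : Subgroup G) (T T' : Set G) : Set G :=
  {g : G | ∃ (l : List G) (lam : G), IsNormalWord T T' l ∧ lam ∈ Lam ∧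
    g = l.prod * lam ∧ ∃ x, l.head? = some x ∧ x ∈ T}

/-!
Write `λ₀ = w μ` in normal form and work with reduced words, i.e. alternating letters from
`A ∖ Λ` and `B ∖ Λ`. Normalizing a reduced word letter by letter never changes the factor of a
letter, so a reduced word lies in `X` exactly when its first letter lies in `A`; in particular
`ΛX = X`, which rules out `λ₀ ∈ Λ`. If `w` ended in `A`, then `λ₀⁻¹`, whose reduced word is `w`
reversed and inverted, would lie in `X`, and so would `1 = λ₀λ₀⁻¹`. If `w` began in `B`, then
`λ₀t ∉ X` for a letter `t ∈ X ∩ A`. So `w` begins in `A` and ends in `B`, the powers `λ₀ⁿ` are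
reduced words of length at least `n` beginning in `A`, and multiplying by `g`, whose word is
shorter, cancels only part of the tail.
-/

theorem Option.Rel.exists_mem_left {α β : Type*} {R : α → β → Prop} {a : Option α}
    {b : Option β} (h : Option.Rel R a b) {y : β} (hy : y ∈ b) : ∃ x ∈ a, R x y := by
  cases h <;> simp_all

theorem Option.Rel.exists_mem_right {α β : Type*} {R : α → β → Prop} {a : Option α}
    {b : Option β} (h : Option.Rel R a b) {x : α} (hx : x ∈ a) : ∃ y ∈ b, R x y := by
  cases h <;> simp_all

theorem List.Forall₂.rel_head? {α β : Type*} {R : α → β → Prop} {l₁ : List α} {l₂ : List β}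
    (h : List.Forall₂ R l₁ l₂) : Option.Rel R l₁.head? l₂.head? := by
  cases h <;> constructor; assumption

theorem List.Forall₂.rel_getLast? {α β : Type*} {R : α → β → Prop} {l₁ : List α}
    {l₂ : List β} (h : List.Forall₂ R l₁ l₂) : Option.Rel R l₁.getLast? l₂.getLast? := by
  simpa only [List.head?_reverse] using (List.forall₂_reverse_iff.2 h).rel_head?

section AmalgamatedProduct

variable {G : Type*} [Group G] {A B Λ : Subgroup G} {T T' : Set G}

theorem IsRightTransversalOf.eq_one_of_mem (hT : IsRightTransversalOf Λ A T) {t : G}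
    (ht : t ∈ T) (htΛ : t ∈ Λ) : t = 1 := by
  obtain ⟨s, -, hs⟩ := hT.2.2 t (hT.1 ht)
  rw [hs t ⟨ht, by simp⟩, hs 1 ⟨hT.2.1, by simpa using htΛ⟩]

theorem IsRightTransversalOf.exists_eq_mul (hT : IsRightTransversalOf Λ A T) {a : G}
    (ha : a ∈ A) : ∃ t ∈ T, ∃ ν ∈ Λ, a = t * ν := by
  obtain ⟨t, ⟨ht, htΛ⟩, -⟩ := hT.2.2 a ha
  exact ⟨t, ht, t⁻¹ * a, htΛ, by group⟩

/-- Reduced words of `A ∗_Λ B`. Since `A ∩ B = Λ`, the chain condition says that consecutive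
letters lie in different factors. -/
def IsReducedWord (A B Λ : Subgroup G) (l : List G) : Prop :=
  (∀ x ∈ l, (x ∈ A ∨ x ∈ B) ∧ x ∉ Λ) ∧ l.IsChain fun x y => x ∈ A ↔ y ∉ A

theorem isReducedWord_append {l₁ l₂ : List G} :
    IsReducedWord A B Λ (l₁ ++ l₂) ↔ IsReducedWord A B Λ l₁ ∧ IsReducedWord A B Λ l₂ ∧
      ∀ x ∈ l₁.getLast?, ∀ y ∈ l₂.head?, x ∈ A ↔ y ∉ A := by
  simp only [IsReducedWord, List.mem_append, or_imp, forall_and, List.isChain_append]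
  tauto

theorem isReducedWord_cons {x : G} {l : List G} :
    IsReducedWord A B Λ (x :: l) ↔ ((x ∈ A ∨ x ∈ B) ∧ x ∉ Λ) ∧ IsReducedWord A B Λ l ∧
      ∀ y ∈ l.head?, x ∈ A ↔ y ∉ A := by
  simp only [IsReducedWord, List.mem_cons, or_imp, forall_and, forall_eq, List.isChain_cons]
  tauto

theorem isReducedWord_singleton {x : G} :
    IsReducedWord A B Λ [x] ↔ (x ∈ A ∨ x ∈ B) ∧ x ∉ Λ := by
  simp [IsReducedWord]

theorem IsReducedWord.append_mul_cons (hAB : Λ = A ⊓ B) {l₁ l₂ : List G} {x ν : G}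
    (h₁ : IsReducedWord A B Λ l₁) (h₂ : IsReducedWord A B Λ (x :: l₂)) (hν : ν ∈ Λ)
    (hjoin : ∀ y ∈ l₁.getLast?, y ∈ A ↔ x ∉ A) : IsReducedWord A B Λ (l₁ ++ ν * x :: l₂) := by
  obtain ⟨hνA, hνB⟩ := Subgroup.mem_inf.1 (hAB ▸ hν)
  rw [isReducedWord_cons] at h₂
  rw [isReducedWord_append, isReducedWord_cons]
  simp only [A.mul_mem_cancel_left hνA, B.mul_mem_cancel_left hνB, Λ.mul_mem_cancel_left hν,
    List.head?_cons, Option.mem_def, Option.some.injEq, forall_eq']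
  exact ⟨h₁, h₂, hjoin⟩

theorem IsReducedWord.append_mul_mul_cons (hAB : Λ = A ⊓ B) {l₁ l₂ : List G} {u ν v : G}
    (h₁ : IsReducedWord A B Λ (l₁ ++ [u])) (h₂ : IsReducedWord A B Λ (v :: l₂)) (hν : ν ∈ Λ)
    (huv : u ∈ A ↔ v ∈ A) (hc : u * ν * v ∉ Λ) :
    IsReducedWord A B Λ (l₁ ++ u * ν * v :: l₂) := by
  obtain ⟨hνA, hνB⟩ := Subgroup.mem_inf.1 (hAB ▸ hν)
  rw [isReducedWord_append, isReducedWord_singleton] at h₁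
  rw [isReducedWord_cons] at h₂
  obtain ⟨hl₁, ⟨hu, -⟩, hjoin⟩ := h₁
  obtain ⟨⟨hv, -⟩, hl₂, hvl₂⟩ := h₂
  have hcA : (u * ν * v ∈ A ∨ u * ν * v ∈ B) ∧ (u * ν * v ∈ A ↔ u ∈ A) := by
    by_cases huA : u ∈ A
    · have hcA := A.mul_mem (A.mul_mem huA hνA) (huv.1 huA)
      tauto
    · have hcB := B.mul_mem (B.mul_mem (hu.resolve_left huA) hνB)
        (hv.resolve_left (huv.not.1 huA))
      have hcA : u * ν * v ∉ A := fun hcA => hc (hAB ▸ Subgroup.mem_inf.2 ⟨hcA, hcB⟩)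
      tauto
  rw [isReducedWord_append, isReducedWord_cons]
  simp only [List.head?_cons, Option.mem_def, Option.some.injEq, forall_eq'] at hjoin hvl₂ ⊢
  refine ⟨hl₁, ⟨⟨hcA.1, hc⟩, hl₂, ?_⟩, ?_⟩
  · intro y hy
    have := hvl₂ y hy
    tauto
  · intro y hy
    have := hjoin y hy
    tauto

theorem ne_one_iff_notMem_of_mem_transversal (hT : IsRightTransversalOf Λ A T)
    (hT' : IsRightTransversalOf Λ B T') {x : G} (hx : x ∈ T ∨ x ∈ T') : x ≠ 1 ↔ x ∉ Λ :=
  ⟨fun hx1 hxΛ => hx1 (hx.elim (hT.eq_one_of_mem · hxΛ) (hT'.eq_one_of_mem · hxΛ)),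
    fun hxΛ hx1 => hxΛ (hx1 ▸ Λ.one_mem)⟩

theorem mem_transversal_iff (hAB : Λ = A ⊓ B) (hT : IsRightTransversalOf Λ A T)
    (hT' : IsRightTransversalOf Λ B T') {x : G} (hx : x ∈ T ∨ x ∈ T') (hxΛ : x ∉ Λ) :
    (x ∈ T ↔ x ∈ A) ∧ (x ∈ T' ↔ x ∉ A) := by
  have hAB' : x ∈ A → x ∈ B → x ∈ Λ := fun hA hB => hAB ▸ Subgroup.mem_inf.2 ⟨hA, hB⟩
  have := @hT.1 x
  have := @hT'.1 x
  tauto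

theorem isNormalWord_iff_isReducedWord (hAB : Λ = A ⊓ B) (hT : IsRightTransversalOf Λ A T)
    (hT' : IsRightTransversalOf Λ B T') {l : List G} (hl : ∀ x ∈ l, x ∈ T ∨ x ∈ T') :
    IsNormalWord T T' l ↔ IsReducedWord A B Λ l := by
  have hletter : ∀ x ∈ l, x ≠ 1 ∧ (x ∈ T ∨ x ∈ T') ↔ (x ∈ A ∨ x ∈ B) ∧ x ∉ Λ := by
    intro x hxl
    have h1 := ne_one_iff_notMem_of_mem_transversal hT hT' (hl x hxl)
    have hTA := mem_transversal_iff hAB hT hT' (hl x hxl)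
    have := @hT.1 x
    have := @hT'.1 x
    tauto
  rw [IsNormalWord, IsReducedWord, forall₂_congr hletter]
  refine and_congr_right fun hlet => List.IsChain.iff_of_mem_imp ?_
  intro x y hx hy
  have hx' := mem_transversal_iff hAB hT hT' (hl x hx) (hlet x hx).2
  have hy' := mem_transversal_iff hAB hT hT' (hl y hy) (hlet y hy).2
  tauto

theorem IsNormalWord.isReducedWord (hAB : Λ = A ⊓ B) (hT : IsRightTransversalOf Λ A T)
    (hT' : IsRightTransversalOf Λ B T') {l : List G} (hl : IsNormalWord T T' l) :
    IsReducedWord A B Λ l :=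
  (isNormalWord_iff_isReducedWord hAB hT hT' fun x hx => (hl.1 x hx).2).1 hl

theorem IsNormalWord.mem_transversal_iff (hAB : Λ = A ⊓ B) (hT : IsRightTransversalOf Λ A T)
    (hT' : IsRightTransversalOf Λ B T') {l : List G} (hl : IsNormalWord T T' l) {x : G}
    (hx : x ∈ l) : (x ∈ T ↔ x ∈ A) ∧ (x ∈ T' ↔ x ∉ A) :=
  _root_.mem_transversal_iff hAB hT hT' (hl.1 x hx).2
    ((ne_one_iff_notMem_of_mem_transversal hT hT' (hl.1 x hx).2).1 (hl.1 x hx).1)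

theorem IsReducedWord.exists_isNormalWord (hAB : Λ = A ⊓ B) (hT : IsRightTransversalOf Λ A T)
    (hT' : IsRightTransversalOf Λ B T') {l : List G} (hl : IsReducedWord A B Λ l) :
    ∃ l' μ, IsNormalWord T T' l' ∧ μ ∈ Λ ∧ l.prod = l'.prod * μ ∧
      l.Forall₂ (fun x y => x ∈ A ↔ y ∈ A) l' := by
  induction l using List.reverseRecOn with
  | nil => exact ⟨[], 1, ⟨by simp, .nil⟩, Λ.one_mem, by simp, .nil⟩
  | append_singleton l x ih =>
    obtain ⟨hl, hx, hjoin⟩ := isReducedWord_append.1 hl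
    obtain ⟨hx, hxΛ⟩ := isReducedWord_singleton.1 hx
    obtain ⟨l', μ, hl', hμ, hprod, hrel⟩ := ih hl
    obtain ⟨hμA, hμB⟩ := Subgroup.mem_inf.1 (hAB ▸ hμ)
    obtain ⟨t, ht, ν, hν, hμx⟩ : ∃ t, (t ∈ T ∨ t ∈ T') ∧ ∃ ν ∈ Λ, μ * x = t * ν := by
      rcases hx with hxA | hxB
      · obtain ⟨t, ht, hν⟩ := hT.exists_eq_mul (A.mul_mem hμA hxA)
        exact ⟨t, .inl ht, hν⟩
      · obtain ⟨t, ht, hν⟩ := hT'.exists_eq_mul (B.mul_mem hμB hxB)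
        exact ⟨t, .inr ht, hν⟩
    have htx : ∀ H : Subgroup G, Λ ≤ H → (t ∈ H ↔ x ∈ H) := fun H hH => by
      rw [← H.mul_mem_cancel_right (hH hν), ← hμx, H.mul_mem_cancel_left (hH hμ)]
    have hΛA : Λ ≤ A := hAB ▸ inf_le_left
    have hΛB : Λ ≤ B := hAB ▸ inf_le_right
    have hletters : ∀ y ∈ l' ++ [t], y ∈ T ∨ y ∈ T' := by
      simpa [or_imp, forall_and, ht] using fun y hy => (hl'.1 y hy).2
    refine ⟨l' ++ [t], ν, ?_, hν, ?_, List.rel_append hrel (.cons (htx A hΛA).symm .nil)⟩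
    · rw [isNormalWord_iff_isReducedWord hAB hT hT' hletters, isReducedWord_append,
        isReducedWord_singleton, htx A hΛA, htx B hΛB, htx Λ le_rfl]
      refine ⟨hl'.isReducedWord hAB hT hT', ⟨hx, hxΛ⟩, fun y hy z hz => ?_⟩
      obtain ⟨w, hw, hwy⟩ := hrel.rel_getLast?.exists_mem_left hy
      rw [List.head?_cons, Option.mem_some_iff] at hz
      rw [← hz, htx A hΛA, ← hwy]
      exact hjoin w hw x rfl
    · rw [List.prod_append, hprod, List.prod_append, List.prod_singleton, List.prod_singleton,
        mul_assoc, hμx, mul_assoc]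

theorem mem_amalgX_iff_of_isNormalWord (hNF : HasUniqueNormalForms Λ T T') {l : List G}
    (hl : IsNormalWord T T' l) {μ : G} (hμ : μ ∈ Λ) :
    l.prod * μ ∈ amalgX Λ T T' ↔ ∃ x ∈ l.head?, x ∈ T := by
  refine ⟨fun ⟨l₂, μ₂, hl₂, hμ₂, h, hhead⟩ => ?_, fun hhead => ⟨l, μ, hl, hμ, rfl, hhead⟩⟩
  obtain ⟨p, -, hp⟩ := hNF (l.prod * μ)
  obtain rfl : l = l₂ := congrArg Prod.fst ((hp (l, μ) ⟨hl, hμ, rfl⟩).trans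
    (hp (l₂, μ₂) ⟨hl₂, hμ₂, h⟩).symm)
  exact hhead

theorem IsReducedWord.mem_amalgX_iff (hAB : Λ = A ⊓ B) (hT : IsRightTransversalOf Λ A T)
    (hT' : IsRightTransversalOf Λ B T') (hNF : HasUniqueNormalForms Λ T T') {l : List G}
    (hl : IsReducedWord A B Λ l) {μ : G} (hμ : μ ∈ Λ) :
    l.prod * μ ∈ amalgX Λ T T' ↔ ∃ x ∈ l.head?, x ∈ A := by
  obtain ⟨l', ν, hl', hν, hprod, hrel⟩ := hl.exists_isNormalWord hAB hT hT'
  rw [hprod, mul_assoc, mem_amalgX_iff_of_isNormalWord hNF hl' (Λ.mul_mem hν hμ)]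
  have hTA : ∀ y ∈ l', y ∈ T ↔ y ∈ A := fun y hy => (hl'.mem_transversal_iff hAB hT hT' hy).1
  constructor
  · rintro ⟨y, hy, hyT⟩
    obtain ⟨x, hx, hxy⟩ := hrel.rel_head?.exists_mem_left hy
    exact ⟨x, hx, hxy.2 ((hTA y (List.mem_of_mem_head? hy)).1 hyT)⟩
  · rintro ⟨x, hx, hxA⟩
    obtain ⟨y, hy, hxy⟩ := hrel.rel_head?.exists_mem_right hx
    exact ⟨y, hy, (hTA y (List.mem_of_mem_head? hy)).2 (hxy.1 hxA)⟩

theorem IsReducedWord.mul_cons (hAB : Λ = A ⊓ B) {l : List G} {x ν : G}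
    (hl : IsReducedWord A B Λ (x :: l)) (hν : ν ∈ Λ) : IsReducedWord A B Λ (ν * x :: l) := by
  simpa using IsReducedWord.append_mul_cons hAB (l₁ := []) ⟨by simp, .nil⟩ hl hν (by simp)

theorem IsReducedWord.map_inv_reverse {l : List G} (hl : IsReducedWord A B Λ l) :
    IsReducedWord A B Λ (l.map (·⁻¹)).reverse := by
  refine ⟨fun x hx => ?_, ?_⟩
  · obtain ⟨y, hy, rfl⟩ := List.mem_map.1 (List.mem_reverse.1 hx)
    simpa using hl.1 y hy
  rw [List.isChain_reverse, List.isChain_map]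
  exact hl.2.imp fun x y h => by simp only [inv_mem_iff]; tauto

theorem one_notMem_amalgX (hNF : HasUniqueNormalForms Λ T T') : (1 : G) ∉ amalgX Λ T T' := by
  simpa using (mem_amalgX_iff_of_isNormalWord hNF (l := []) ⟨by simp, .nil⟩ Λ.one_mem).not

theorem mul_mem_amalgX (hAB : Λ = A ⊓ B) (hT : IsRightTransversalOf Λ A T)
    (hT' : IsRightTransversalOf Λ B T') (hNF : HasUniqueNormalForms Λ T T') {ν g : G}
    (hν : ν ∈ Λ) (hg : g ∈ amalgX Λ T T') : ν * g ∈ amalgX Λ T T' := by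
  obtain ⟨l, μ, hl, hμ, rfl, x, hx, hxT⟩ := hg
  rw [List.eq_cons_of_mem_head? hx] at hl ⊢
  rw [← mul_assoc, List.prod_cons, ← mul_assoc, ← List.prod_cons,
    ((hl.isReducedWord hAB hT hT').mul_cons hAB hν).mem_amalgX_iff hAB hT hT' hNF hμ]
  exact ⟨_, rfl, A.mul_mem ((hAB ▸ hν : ν ∈ A ⊓ B).1) (hT.1 hxT)⟩

theorem smul_amalgX (hAB : Λ = A ⊓ B) (hT : IsRightTransversalOf Λ A T)
    (hT' : IsRightTransversalOf Λ B T') (hNF : HasUniqueNormalForms Λ T T') {ν : G}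
    (hν : ν ∈ Λ) : ν • amalgX Λ T T' = amalgX Λ T T' := by
  refine subset_antisymm ?_ fun g hg => ?_
  · rintro _ ⟨g, hg, rfl⟩
    exact mul_mem_amalgX hAB hT hT' hNF hν hg
  · exact ⟨ν⁻¹ * g, mul_mem_amalgX hAB hT hT' hNF (Λ.inv_mem hν) hg, mul_inv_cancel_left ν g⟩

theorem IsReducedWord.exists_prod_mul_prod (hAB : Λ = A ⊓ B) {W m : List G}
    (hW : IsReducedWord A B Λ W) (hm : IsReducedWord A B Λ m) {ν : G} (hν : ν ∈ Λ)
    (hlen : m.length < W.length) :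
    ∃ R ν', IsReducedWord A B Λ R ∧ ν' ∈ Λ ∧ W.prod * ν * m.prod = R.prod * ν' ∧
      R.head? = W.head? := by
  induction m generalizing W ν with
  | nil => exact ⟨W, ν, hW, hν, by simp, rfl⟩
  | cons v m ih =>
    obtain ⟨W, u, rfl⟩ := (List.eq_nil_or_concat' W).resolve_left (by rintro rfl; simp at hlen)
    have hWne : W ≠ [] := by rintro rfl; simp at hlen
    have hhead : (W ++ [u]).head? = W.head? := List.head?_append_of_ne_nil W hWne
    by_cases hdiff : u ∈ A ↔ v ∉ A
    · refine ⟨W ++ [u] ++ ν * v :: m, 1, hW.append_mul_cons hAB hm hν (by simpa using hdiff),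
        Λ.one_mem, by simp [mul_assoc], ?_⟩
      rw [List.append_assoc, List.head?_append_of_ne_nil W hWne, hhead]
    have huv : u ∈ A ↔ v ∈ A := by tauto
    by_cases hc : u * ν * v ∈ Λ
    · obtain ⟨R, ν', hR, hν', hprod, hRhead⟩ :=
        ih (isReducedWord_append.1 hW).1 (isReducedWord_cons.1 hm).2.1 hc
          (by simp at hlen; omega)
      refine ⟨R, ν', hR, hν', ?_, hRhead.trans hhead.symm⟩
      rw [← hprod]
      simp [mul_assoc]
    · refine ⟨W ++ u * ν * v :: m, 1, hW.append_mul_mul_cons hAB hm hν huv hc, Λ.one_mem,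
        by simp [mul_assoc], ?_⟩
      rw [List.head?_append_of_ne_nil W hWne, hhead]

theorem IsReducedWord.exists_pow (hAB : Λ = A ⊓ B) {w : List G} (hw : IsReducedWord A B Λ w)
    (hne : w ≠ []) (hcyc : ∀ u ∈ w.getLast?, ∀ v ∈ w.head?, u ∈ A ↔ v ∉ A) {μ : G}
    (hμ : μ ∈ Λ) (n : ℕ) :
    ∃ W μ', IsReducedWord A B Λ W ∧ μ' ∈ Λ ∧ (w.prod * μ) ^ (n + 1) = W.prod * μ' ∧
      W.head? = w.head? ∧ n < W.length := by
  induction n with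
  | zero => exact ⟨w, μ, hw, hμ, by simp, rfl, List.length_pos_iff.2 hne⟩
  | succ n ih =>
    obtain ⟨W, μ', hW, hμ', hpow, hhead, hlen⟩ := ih
    obtain ⟨y, W, rfl⟩ := List.exists_cons_of_ne_nil (l := W) (by rintro rfl; simp at hlen)
    refine ⟨w ++ μ * y :: W, μ', hw.append_mul_cons hAB hW hμ fun u hu => hcyc u hu y
      (hhead ▸ rfl), hμ', ?_, List.head?_append_of_ne_nil w hne, ?_⟩
    · rw [pow_succ', hpow]
      simp [mul_assoc]
    · have := List.length_pos_iff.2 hne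
      simp at hlen ⊢
      omega

theorem getLast_notMem_of_smul_subset (hAB : Λ = A ⊓ B) (hT : IsRightTransversalOf Λ A T)
    (hT' : IsRightTransversalOf Λ B T') (hNF : HasUniqueNormalForms Λ T T') {g μ : G}
    {w : List G} (hsub : g • amalgX Λ T T' ⊆ amalgX Λ T T') (hw : IsReducedWord A B Λ w)
    (hμ : μ ∈ Λ) (hg : g = w.prod * μ) : ∀ u ∈ w.getLast?, u ∉ A := by
  intro u hu huA
  obtain ⟨w, rfl⟩ := List.getLast?_eq_some_iff.1 hu
  have hinv : ((w ++ [u]).map (·⁻¹)).reverse.prod * 1 ∈ amalgX Λ T T' := by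
    refine (hw.map_inv_reverse.mem_amalgX_iff hAB hT hT' hNF Λ.one_mem).2 ⟨u⁻¹, ?_, A.inv_mem huA⟩
    simp
  have hginv : g⁻¹ ∈ amalgX Λ T T' := by
    rw [hg, mul_inv_rev, List.prod_inv_reverse, ← mul_one (List.prod _)]
    exact mul_mem_amalgX hAB hT hT' hNF (Λ.inv_mem hμ) hinv
  exact one_notMem_amalgX hNF (hsub ⟨g⁻¹, hginv, mul_inv_cancel g⟩)

theorem head_mem_of_smul_subset (hAB : Λ = A ⊓ B) (hT : IsRightTransversalOf Λ A T)
    (hT' : IsRightTransversalOf Λ B T') (hNF : HasUniqueNormalForms Λ T T') {g μ : G}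
    {w : List G} (hsub : g • amalgX Λ T T' ⊆ amalgX Λ T T') (hne : (amalgX Λ T T').Nonempty)
    (hw : IsReducedWord A B Λ w) (hμ : μ ∈ Λ) (hg : g = w.prod * μ)
    (hlast : ∀ u ∈ w.getLast?, u ∉ A) : ∀ v ∈ w.head?, v ∈ A := by
  obtain ⟨-, l, -, hl, -, -, t, ht, htT⟩ := hne
  have htA : t ∈ A := hT.1 htT
  have ht : IsReducedWord A B Λ [t] :=
    isReducedWord_singleton.2 ⟨.inl htA, ((hl.isReducedWord hAB hT hT').1 t
      (List.mem_of_mem_head? ht)).2⟩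
  have hgt : (w ++ [μ * t]).prod * 1 ∈ amalgX Λ T T' := by
    have htX := (ht.mem_amalgX_iff hAB hT hT' hNF Λ.one_mem).2 ⟨t, rfl, htA⟩
    simpa [hg, mul_assoc] using hsub ⟨t, by simpa using htX, rfl⟩
  have hred := hw.append_mul_cons hAB ht hμ fun u hu => by simp [hlast u hu, htA]
  intro v hv
  obtain ⟨x, hx, hxA⟩ := (hred.mem_amalgX_iff hAB hT hT' hNF Λ.one_mem).1 hgt
  rw [List.head?_append_of_ne_nil w (by rintro rfl; simp at hv), hv, Option.mem_some_iff] at hx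
  exact hx ▸ hxA

theorem exists_forall_pow_mul_mem_amalgX (hAB : Λ = A ⊓ B) (hT : IsRightTransversalOf Λ A T)
    (hT' : IsRightTransversalOf Λ B T') (hNF : HasUniqueNormalForms Λ T T') {w : List G}
    (hw : IsReducedWord A B Λ w) (hcyc : ∀ u ∈ w.getLast?, ∀ v ∈ w.head?, u ∈ A ↔ v ∉ A)
    (hhead : ∃ v ∈ w.head?, v ∈ A) {μ : G} (hμ : μ ∈ Λ) (g : G) :
    ∃ N : ℕ, ∀ n ≥ N, (w.prod * μ) ^ n * g ∈ amalgX Λ T T' := by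
  obtain ⟨⟨m, κ⟩, ⟨hm, hκ, hg⟩, -⟩ := hNF g
  dsimp only at hm hκ hg
  subst hg
  refine ⟨m.length + 1, fun n hn => ?_⟩
  obtain ⟨k, rfl⟩ : ∃ k, n = k + 1 := Nat.exists_eq_succ_of_ne_zero (by omega)
  have hne : w ≠ [] := by rintro rfl; simp at hhead
  obtain ⟨W, μ', hW, hμ', hpow, hWhead, hlen⟩ := hw.exists_pow hAB hne hcyc hμ k
  obtain ⟨R, ν, hR, hν, hprod, hRhead⟩ :=
    hW.exists_prod_mul_prod hAB (hm.isReducedWord hAB hT hT') hμ' (by omega)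
  rw [hpow, ← mul_assoc, hprod, mul_assoc,
    hR.mem_amalgX_iff hAB hT hT' hNF (Λ.mul_mem hν hκ), hRhead, hWhead]
  exact hhead

end AmalgamatedProduct

theorem translate_ssubset_consequences_general {G : Type*} [Group G]
    (A B Lam : Subgroup G) (hAB : Lam = A ⊓ B)
    (T T' : Set G)
    (hT : IsRightTransversalOf Lam A T) (hT' : IsRightTransversalOf Lam B T')
    (hNF : HasUniqueNormalForms Lam T T')
    (X : Set G) (hX : X = amalgX Lam T T')
    (lam0 : G) (hlam0 : lam0 • X ⊂ X) :
    lam0 ∈ X ∧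
    (∃ (l : List G) (mu : G), IsNormalWord T T' l ∧ mu ∈ Lam ∧ lam0 = l.prod * mu ∧
      (∃ x, l.head? = some x ∧ x ∈ T) ∧ (∃ y, l.getLast? = some y ∧ y ∈ T')) ∧
    ∀ g : G, ∃ N : ℕ, ∀ n ≥ N, lam0 ^ n * g ∈ X := by
  subst hX
  obtain ⟨⟨w, μ⟩, ⟨hw, hμ, hlam0w⟩, -⟩ := hNF lam0
  have hwr := hw.isReducedWord hAB hT hT'
  have hwne : w ≠ [] := by
    rintro rfl
    exact hlam0.ne (smul_amalgX hAB hT hT' hNF (by simpa [hlam0w] using hμ))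
  have hlast := getLast_notMem_of_smul_subset hAB hT hT' hNF hlam0.subset hwr hμ hlam0w
  have hhead := head_mem_of_smul_subset hAB hT hT' hNF hlam0.subset
    ((Set.exists_of_ssubset hlam0).imp fun _ => And.left) hwr hμ hlam0w hlast
  obtain ⟨v, hv⟩ := Option.ne_none_iff_exists'.1 (List.head?_eq_none_iff.not.2 hwne)
  obtain ⟨u, hu⟩ := Option.ne_none_iff_exists'.1 (List.getLast?_eq_none_iff.not.2 hwne)
  have hvT : v ∈ T :=
    (hw.mem_transversal_iff hAB hT hT' (List.mem_of_mem_head? hv)).1.2 (hhead v hv)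
  have huT' : u ∈ T' :=
    (hw.mem_transversal_iff hAB hT hT' (List.mem_of_mem_getLast? hu)).2.2 (hlast u hu)
  refine ⟨⟨w, μ, hw, hμ, hlam0w, v, hv, hvT⟩, ⟨w, μ, hw, hμ, hlam0w, ⟨v, hv, hvT⟩, u, hu, huT'⟩,
    ?_⟩
  rw [hlam0w]
  refine exists_forall_pow_mul_mem_amalgX hAB hT hT' hNF hwr ?_ ⟨v, hv, hhead v hv⟩ hμ
  rintro u' hu' v' hv'
  simp [hlast u' hu', hhead v' hv']

theorem translate_ssubset_consequences {G : Type*} [Group G]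
    (A B Lam : Subgroup G) (hA : Lam < A) (hB : Lam < B) (hAB : Lam = A ⊓ B)
    (T T' : Set G)
    (hT : IsRightTransversalOf Lam A T) (hT' : IsRightTransversalOf Lam B T')
    (hNF : HasUniqueNormalForms Lam T T')
    (X : Set G) (hX : X = amalgX Lam T T')
    (lam0 : G) (hlam0 : lam0 • X ⊂ X) :
    lam0 ∈ X ∧
    (∃ (l : List G) (mu : G), IsNormalWord T T' l ∧ mu ∈ Lam ∧ lam0 = l.prod * mu ∧
      (∃ x, l.head? = some x ∧ x ∈ T) ∧ (∃ y, l.getLast? = some y ∧ y ∈ T')) ∧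
    ∀ g : G, ∃ N : ℕ, ∀ n ≥ N, lam0 ^ n * g ∈ X :=
  translate_ssubset_consequences_general A B Lam hAB T T' hT hT' hNF X hX lam0 hlam0
end

section
/- Suppose a group G acts on a tree T by automorphisms, without inversions and without fixing any vertex, and the action is transitive on the (unoriented) edges of T. Let e be an edge of T, let E denote the vertex set of one component of T − e, and let Y = {k ∈ G : both endpoints of ke lie in E}, Y* = G − Y. Let Λ be a subgroup of G which fixes no vertex of T, and let T′ be a minimal Λ-invariant subtree of T. Then for every h ∈ G, the edge he lies in T′ if and only if there exists λ ∈ Λ such that λhY ⊊ hY or λhY* ⊊ hY*. -/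
/-!
Put `A = h • E = T.side (h • u) (h • v)`. Then `h • Y` is the set of elements carrying `e` into
`A`; as every vertex of a half-tree lies on an edge inside it (this is where edge-transitivity,
the absence of inversions and of a global fixed point enter), `B ↦ {k | k • e ⊆ B}` reflects
strict inclusions of half-trees, and the right-hand side becomes `l • A ⊊ A` for some `l ∈ Λ`.

If `l • A ⊊ A`, the half-trees `l ^ n • A` shrink to nothing, so a nonempty `Λ`-invariant subtree
lies neither in `A` nor in its complement: it contains both endpoints of `h e`. Conversely, if
both endpoints lie in the minimal subtree `T'`, some `l₁ ∈ Λ` moves the head of `h e` out of `A`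
(else `{x ∈ T' | Λ x ⊆ A}` would be a smaller invariant subtree) and some `l₂ ∈ Λ` moves its tail
out of `Aᶜ`; comparing the half-trees of `h e`, `l₁ h e` and `l₂ h e` gives the required `l`.
-/

open scoped Pointwise

namespace Set

variable {α G : Type*} [Group G] [MulAction G α] {g : G} {A B : Set α}

lemma smul_set_ssubset_smul_set_iff : g • A ⊂ g • B ↔ A ⊂ B := by
  simp only [ssubset_iff_subset_not_subset, smul_set_subset_smul_set_iff]

lemma inv_smul_set_ssubset_iff : g⁻¹ • A ⊂ A ↔ A ⊂ g • A := by
  rw [← smul_set_ssubset_smul_set_iff (g := g), smul_inv_smul]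

lemma smul_set_compl_ssubset_compl_iff : g • Aᶜ ⊂ Aᶜ ↔ A ⊂ g • A := by
  rw [smul_set_compl]
  exact compl_lt_compl_iff_lt

lemma exists_smul_set_ssubset_or_ssubset_smul_set_iff (L : Subgroup G) :
    (∃ l ∈ L, l • A ⊂ A ∨ A ⊂ l • A) ↔ ∃ l ∈ L, l • A ⊂ A := by
  refine ⟨fun ⟨l, hl, h⟩ => h.elim (fun h => ⟨l, hl, h⟩) fun h => ?_,
    fun ⟨l, hl, h⟩ => ⟨l, hl, .inl h⟩⟩
  exact ⟨l⁻¹, inv_mem hl, inv_smul_set_ssubset_iff.2 h⟩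

end Set

namespace SimpleGraph

variable {V : Type*} {T : SimpleGraph V}

lemma Reachable.of_adj_closed {P : V → Prop} (hP : ∀ ⦃x y⦄, T.Adj x y → P x → P y)
    {x y : V} (h : T.Reachable x y) (hx : P x) : P y := by
  rw [reachable_iff_reflTransGen] at h
  induction h with
  | refl => exact hx
  | tail _ hadj ih => exact hP hadj ih

/-- In a tree, the sets inducing subtrees are exactly the nonempty path-closed sets. -/
def IsPathClosed (T : SimpleGraph V) (C : Set V) : Prop :=
  ∀ ⦃x y : V⦄ (p : T.Walk x y), p.IsPath → x ∈ C → y ∈ C → ∀ z ∈ p.support, z ∈ C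

lemma IsAcyclic.isPathClosed (hT : T.IsAcyclic) {C : Set V}
    (hC : (T.induce C).Preconnected) : T.IsPathClosed C := by
  classical
  intro x y p hp hx hy z hz
  obtain ⟨w⟩ := hC ⟨x, hx⟩ ⟨y, hy⟩
  have hw : ∀ z ∈ (w.map (Embedding.induce C).toHom).support, z ∈ C := by
    intro z hz
    rw [Walk.support_map, List.mem_map] at hz
    obtain ⟨⟨z, hzC⟩, -, rfl⟩ := hz
    exact hzC
  obtain rfl : p = (w.map (Embedding.induce C).toHom).bypass :=
    congrArg Subtype.val ((hT.subsingleton_path x y).elim ⟨p, hp⟩ ⟨_, Walk.bypass_isPath _⟩)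
  exact hw z (Walk.support_bypass_subset_support _ hz)

lemma IsPathClosed.induce_connected (hT : T.Preconnected) {C : Set V} (hC : T.IsPathClosed C)
    (hne : C.Nonempty) : (T.induce C).Connected := by
  obtain ⟨x, hx⟩ := hne
  refine (connected_iff_exists_forall_reachable _).2 ⟨⟨x, hx⟩, fun ⟨y, hy⟩ => ?_⟩
  obtain ⟨p, hp⟩ := (hT x y).exists_isPath
  exact (p.induce C (hC p hp hx hy)).reachable

def side (T : SimpleGraph V) (a b : V) : Set V :=
  {x | (T.deleteEdges {s(a, b)}).Reachable b x}

variable {a b : V}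

lemma mem_side_self (a b : V) : b ∈ T.side a b := Reachable.refl b

lemma mem_side_of_mem_support {x z : V} (w : (T.deleteEdges {s(a, b)}).Walk b x)
    (hz : z ∈ w.support) : z ∈ T.side a b := by
  classical
  exact ⟨w.takeUntil z hz⟩

lemma mem_side_swap_iff {x : V} :
    x ∈ T.side b a ↔ (T.deleteEdges {s(a, b)}).Reachable a x := by
  rw [side, Sym2.eq_swap]; rfl

lemma induce_side_connected : (T.induce (T.side a b)).Connected := by
  refine (connected_iff_exists_forall_reachable _).2 ⟨⟨b, mem_side_self a b⟩, ?_⟩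
  rintro ⟨x, ⟨w⟩⟩
  have hsupp : ∀ z ∈ (w.mapLe (deleteEdges_le _)).support, z ∈ T.side a b := fun z hz => by
    rw [Walk.support_mapLe_eq_support] at hz
    exact mem_side_of_mem_support w hz
  exact ((w.mapLe (deleteEdges_le _)).induce _ hsupp).reachable

lemma IsAcyclic.isPathClosed_side (hT : T.IsAcyclic) : T.IsPathClosed (T.side a b) :=
  hT.isPathClosed induce_side_connected.preconnected

lemma Walk.mem_edges_of_mem_side_of_notMem_side {x y : V} (hx : x ∈ T.side a b)
    (hy : y ∉ T.side a b) (w : T.Walk x y) : s(a, b) ∈ w.edges := by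
  by_contra hw
  refine hy (hx.trans (w.toDeleteEdges {s(a, b)} fun e he => ?_).reachable)
  rintro rfl
  exact hw he

lemma IsAcyclic.notMem_side (hT : T.IsAcyclic) (hab : T.Adj a b) : a ∉ T.side a b :=
  fun h => isBridge_iff.1 (isAcyclic_iff_forall_adj_isBridge.1 hT hab) h.symm

lemma IsAcyclic.eq_of_adj_of_mem_side (hT : T.IsAcyclic) (hab : T.Adj a b) {x y : V}
    (hxy : T.Adj x y) (hx : x ∉ T.side a b) (hy : y ∈ T.side a b) : x = a ∧ y = b := by
  have he := (Walk.cons hxy.symm Walk.nil).mem_edges_of_mem_side_of_notMem_side hy hx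
  simp only [Walk.edges_cons, Walk.edges_nil, List.mem_singleton, Sym2.eq_iff] at he
  rcases he with ⟨rfl, -⟩ | ⟨rfl, rfl⟩
  · exact absurd hy (hT.notMem_side hab)
  · exact ⟨rfl, rfl⟩

lemma IsAcyclic.notMem_side_of_side_ssubset (hT : T.IsAcyclic) (hab : T.Adj a b) {a' b' : V}
    (hab' : T.Adj a' b') (h : T.side a' b' ⊂ T.side a b) : b ∉ T.side a' b' := by
  intro hb
  obtain ⟨rfl, rfl⟩ :=
    hT.eq_of_adj_of_mem_side hab' hab (fun ha => hT.notMem_side hab (h.subset ha)) hb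
  exact h.ne rfl

lemma IsTree.compl_side (hT : T.IsTree) (hab : T.Adj a b) : (T.side a b)ᶜ = T.side b a := by
  refine Set.ext fun x => ⟨fun hx => ?_, fun hx hx' => ?_⟩
  · have hstep : ∀ ⦃x y⦄, T.Adj x y → x ∈ T.side a b ∨ x ∈ T.side b a →
        y ∈ T.side a b ∨ y ∈ T.side b a := by
      intro y z hyz hy
      by_cases he : s(y, z) = s(a, b)
      · rcases Sym2.eq_iff.1 he with ⟨-, rfl⟩ | ⟨-, rfl⟩
        · exact Or.inl (mem_side_self _ _)
        · exact Or.inr (mem_side_self _ _)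
      · have hr : (T.deleteEdges {s(a, b)}).Reachable y z := Adj.reachable (by simp [hyz, he])
        exact hy.imp (·.trans hr) fun h =>
          mem_side_swap_iff.2 ((mem_side_swap_iff.1 h).trans hr)
    exact ((hT.1 b x).of_adj_closed hstep (Or.inl (mem_side_self a b))).resolve_left hx
  · exact hT.2.notMem_side hab (hx'.trans (mem_side_swap_iff.1 hx).symm)

lemma side_subset_side {a' b' : V} (ha' : a' ∉ T.side a b) (hb : b ∈ T.side a' b') :
    T.side a b ⊆ T.side a' b' := by
  intro x ⟨w⟩
  have w' := (w.mapLe (deleteEdges_le _)).toDeleteEdges {s(a', b')} fun e he => by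
    rintro rfl
    rw [Walk.edges_mapLe_eq_edges] at he
    exact ha' (mem_side_of_mem_support w (w.fst_mem_support_of_mem_edges he))
  exact hb.trans w'.reachable

lemma exists_adj_mem_side {c : V} (hab : T.Adj a b) (hbc : T.Adj b c) (hca : c ≠ a) {x : V}
    (hx : x ∈ T.side a b) : ∃ y ∈ T.side a b, T.Adj x y := by
  by_cases hxb : x = b
  · subst hxb
    refine ⟨c, Adj.reachable ?_, hbc⟩
    simp only [deleteEdges_adj, Set.mem_singleton_iff, Sym2.eq_iff, hbc, true_and]
    rintro (⟨rfl, -⟩ | ⟨-, rfl⟩)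
    · exact hab.ne rfl
    · exact hca rfl
  · obtain ⟨w⟩ := hx
    obtain ⟨y, hxy, p, -⟩ := Walk.exists_eq_cons_of_ne hxb w.reverse
    exact ⟨y, p.reachable.symm, (deleteEdges_adj.1 hxy).1⟩

section Action

variable {G : Type*} [Group G] [MulAction G V]

lemma smul_side_subset (hact : ∀ (g : G) (x y : V), T.Adj x y ↔ T.Adj (g • x) (g • y))
    (g : G) (a b : V) : g • T.side a b ⊆ T.side (g • a) (g • b) := by
  rintro _ ⟨x, hx, rfl⟩
  let f : T.deleteEdges {s(a, b)} →g T.deleteEdges {s(g • a, g • b)} :=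
    ⟨(g • ·), fun {x y} hxy => by
      simp only [deleteEdges_adj, Set.mem_singleton_iff] at hxy ⊢
      refine ⟨(hact g x y).1 hxy.1, fun he => hxy.2 ?_⟩
      exact Sym2.map.injective (MulAction.injective g) (by simpa using he)⟩
  exact hx.map f

lemma smul_side (hact : ∀ (g : G) (x y : V), T.Adj x y ↔ T.Adj (g • x) (g • y))
    (g : G) (a b : V) : g • T.side a b = T.side (g • a) (g • b) := by
  refine (smul_side_subset hact g a b).antisymm ?_
  rw [Set.subset_smul_set_iff]
  simpa using smul_side_subset hact g⁻¹ (g • a) (g • b)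

lemma IsTree.inv_smul_side_swap_ssubset (hT : T.IsTree) (hab : T.Adj a b) {l : G}
    (hl : l • T.side a b ⊂ T.side a b) : l⁻¹ • T.side b a ⊂ T.side b a := by
  rwa [← hT.compl_side hab, Set.smul_set_compl_ssubset_compl_iff,
    ← Set.inv_smul_set_ssubset_iff, inv_inv]

/-- Otherwise the path from `x` to `b` would pass through the infinitely many distinct
vertices `l ^ n • b`. -/
lemma IsTree.exists_notMem_pow_smul_side (hT : T.IsTree)
    (hact : ∀ (g : G) (x y : V), T.Adj x y ↔ T.Adj (g • x) (g • y)) (hab : T.Adj a b) {l : G}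
    (hl : l • T.side a b ⊂ T.side a b) (x : V) : ∃ n : ℕ, x ∉ l ^ n • T.side a b := by
  have hanti : StrictAnti fun n : ℕ => l ^ n • T.side a b :=
    strictAnti_nat_of_succ_lt fun n => by
      simpa only [pow_succ, mul_smul] using Set.smul_set_ssubset_smul_set_iff.2 hl
  have hb : ∀ n, 0 < n → b ∉ l ^ n • T.side a b := fun n hn => by
    have hlt := hanti hn
    simp only [pow_zero, one_smul] at hlt
    rw [smul_side hact] at hlt ⊢
    exact hT.2.notMem_side_of_side_ssubset hab ((hact _ a b).1 hab) hlt
  by_contra! hx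
  obtain ⟨w⟩ := hT.1 x b
  have hmem : ∀ n, l ^ n • b ∈ w.support := by
    intro n
    rcases n.eq_zero_or_pos with rfl | hn
    · simp
    · have hxn := hx n
      have hbn := hb n hn
      rw [smul_side hact] at hxn hbn
      exact w.snd_mem_support_of_mem_edges (w.mem_edges_of_mem_side_of_notMem_side hxn hbn)
  obtain ⟨m, n, hmn, heq⟩ :=
    (List.finite_toSet w.support).exists_lt_map_eq_of_forall_mem hmem
  have heq' : l ^ m • b = l ^ m • l ^ (n - m) • b := by
    rw [← mul_smul, ← pow_add, Nat.add_sub_cancel' hmn.le]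
    exact heq
  exact hb (n - m) (Nat.sub_pos_of_lt hmn)
    (Set.mem_of_eq_of_mem (smul_left_cancel _ heq') (Set.smul_mem_smul_set (mem_side_self a b)))

lemma IsTree.not_subset_side_of_smul_ssubset (hT : T.IsTree)
    (hact : ∀ (g : G) (x y : V), T.Adj x y ↔ T.Adj (g • x) (g • y)) (hab : T.Adj a b)
    {L : Subgroup G} {l : G} (hl : l ∈ L) (hlA : l • T.side a b ⊂ T.side a b) {S : Set V}
    (hne : S.Nonempty) (hinv : ∀ m ∈ L, m • S = S) : ¬ S ⊆ T.side a b := by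
  intro hsub
  obtain ⟨x, hx⟩ := hne
  obtain ⟨n, hn⟩ := hT.exists_notMem_pow_smul_side hact hab hlA x
  rw [← hinv _ (pow_mem hl n)] at hx
  exact hn (Set.smul_set_mono hsub hx)

lemma IsPathClosed.subset_side_or_subset_compl (hT : T.Preconnected) {S : Set V}
    (hS : T.IsPathClosed S) (hb : b ∉ S) : S ⊆ T.side a b ∨ S ⊆ (T.side a b)ᶜ := by
  rw [or_iff_not_imp_left, Set.not_subset]
  rintro ⟨q, hqS, hq⟩ p hpS hp
  obtain ⟨w, hw⟩ := (hT p q).exists_isPath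
  exact hb (hS w hw hpS hqS b (w.snd_mem_support_of_mem_edges
    (w.mem_edges_of_mem_side_of_notMem_side hp hq)))

lemma IsTree.mem_of_smul_side_ssubset (hT : T.IsTree)
    (hact : ∀ (g : G) (x y : V), T.Adj x y ↔ T.Adj (g • x) (g • y)) (hab : T.Adj a b)
    {L : Subgroup G} {l : G} (hl : l ∈ L) (hlA : l • T.side a b ⊂ T.side a b) {S : Set V}
    (hS : T.IsPathClosed S) (hne : S.Nonempty) (hinv : ∀ m ∈ L, m • S = S) : b ∈ S := by
  by_contra hb
  rcases hS.subset_side_or_subset_compl hT.1.preconnected hb with h | h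
  · exact hT.not_subset_side_of_smul_ssubset hact hab hl hlA hne hinv h
  · rw [hT.compl_side hab] at h
    exact hT.not_subset_side_of_smul_ssubset hact hab.symm (inv_mem hl)
      (hT.inv_smul_side_swap_ssubset hab hlA) hne hinv h

lemma IsTree.exists_smul_notMem_side (hT : T.IsTree)
    (hact : ∀ (g : G) (x y : V), T.Adj x y ↔ T.Adj (g • x) (g • y)) (hab : T.Adj a b)
    {L : Subgroup G} {S : Set V} (hconn : (T.induce S).Connected) (hinv : ∀ l ∈ L, l • S = S)
    (hmin : ∀ S' : Set V, S' ⊆ S → (T.induce S').Connected →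
      (∀ l ∈ L, l • S' = S') → S' = S)
    (ha : a ∈ S) (hb : b ∈ S) : ∃ l ∈ L, l • b ∉ T.side a b := by
  by_contra! hL
  set S' : Set V := {x | x ∈ S ∧ ∀ l ∈ L, l • x ∈ T.side a b}
  have hS' : T.IsPathClosed S' := by
    intro x y p hp hx hy z hz
    refine ⟨hT.2.isPathClosed hconn.preconnected p hp hx.1 hy.1 z hz, fun l hl => ?_⟩
    let f : T →g T := ⟨(l • ·), (hact l _ _).1⟩
    refine hT.2.isPathClosed_side (p.map f) (hp.map (MulAction.injective l)) (hx.2 l hl)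
      (hy.2 l hl) _ ?_
    rw [Walk.support_map]
    exact List.mem_map_of_mem hz
  have hsmul : ∀ m ∈ L, m • S' ⊆ S' := by
    rintro m hm _ ⟨x, hx, rfl⟩
    refine ⟨hinv m hm ▸ Set.smul_mem_smul_set hx.1, fun l hl => ?_⟩
    rw [← mul_smul]
    exact hx.2 _ (mul_mem hl hm)
  have hS'S : S' = S := by
    refine hmin S' (fun x hx => hx.1) (hS'.induce_connected hT.1.preconnected ⟨b, hb, hL⟩)
      fun m hm => (hsmul m hm).antisymm ?_
    rw [Set.subset_smul_set_iff]
    exact hsmul _ (inv_mem hm)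
  have ha' : a ∈ S' := hS'S ▸ ha
  exact hT.2.notMem_side hab (by simpa using ha'.2 1 (one_mem L))

lemma IsTree.ssubset_smul_side_or_ssubset_smul_side (hT : T.IsTree)
    (hact : ∀ (g : G) (x y : V), T.Adj x y ↔ T.Adj (g • x) (g • y))
    (hni : ∀ (g : G) (x y : V), T.Adj x y → ¬(g • x = y ∧ g • y = x)) (hab : T.Adj a b)
    {g : G} (hg : g • b ∉ T.side a b) :
    T.side a b ⊂ g • T.side a b ∨ T.side a b ⊂ g • T.side b a := by
  have hgab : T.Adj (g • a) (g • b) := (hact g a b).1 hab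
  have hga : g • a ∉ T.side a b := fun hga =>
    hni g a b hab (hT.2.eq_of_adj_of_mem_side hab hgab.symm hg hga).symm
  rw [smul_side hact, smul_side hact]
  by_cases hb : b ∈ T.side (g • a) (g • b)
  · exact .inl ((Set.ssubset_iff_of_subset (side_subset_side hga hb)).2
      ⟨g • b, mem_side_self _ _, hg⟩)
  · rw [← Set.mem_compl_iff, hT.compl_side hgab] at hb
    exact .inr ((Set.ssubset_iff_of_subset (side_subset_side hg hb)).2
      ⟨g • a, mem_side_self _ _, hga⟩)

lemma IsTree.exists_smul_side_ssubset_of_mem (hT : T.IsTree)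
    (hact : ∀ (g : G) (x y : V), T.Adj x y ↔ T.Adj (g • x) (g • y))
    (hni : ∀ (g : G) (x y : V), T.Adj x y → ¬(g • x = y ∧ g • y = x)) (hab : T.Adj a b)
    {L : Subgroup G} {S : Set V} (hconn : (T.induce S).Connected) (hinv : ∀ l ∈ L, l • S = S)
    (hmin : ∀ S' : Set V, S' ⊆ S → (T.induce S').Connected →
      (∀ l ∈ L, l • S' = S') → S' = S)
    (ha : a ∈ S) (hb : b ∈ S) : ∃ l ∈ L, l • T.side a b ⊂ T.side a b := by
  obtain ⟨l₁, hl₁, h₁⟩ := hT.exists_smul_notMem_side hact hab hconn hinv hmin ha hb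
  obtain ⟨l₂, hl₂, h₂⟩ := hT.exists_smul_notMem_side hact hab.symm hconn hinv hmin hb ha
  rw [← Set.exists_smul_set_ssubset_or_ssubset_smul_set_iff]
  rcases hT.ssubset_smul_side_or_ssubset_smul_side hact hni hab h₁ with h₁ | h₁
  · exact ⟨l₁, hl₁, .inr h₁⟩
  rcases hT.ssubset_smul_side_or_ssubset_smul_side hact hni hab.symm h₂ with h₂ | h₂
  · rw [← hT.compl_side hab, Set.smul_set_compl] at h₂
    exact ⟨l₂, hl₂, .inl (compl_lt_compl_iff_lt.1 h₂)⟩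
  · rw [← hT.compl_side hab] at h₁ h₂
    refine ⟨l₁ * l₂, mul_mem hl₁ hl₂, .inr (h₁.trans_subset ?_)⟩
    rw [mul_smul]
    exact Set.smul_set_mono h₂.subset

theorem IsTree.mem_and_mem_iff_exists_smul_side_ssubset (hT : T.IsTree)
    (hact : ∀ (g : G) (x y : V), T.Adj x y ↔ T.Adj (g • x) (g • y))
    (hni : ∀ (g : G) (x y : V), T.Adj x y → ¬(g • x = y ∧ g • y = x)) (hab : T.Adj a b)
    {L : Subgroup G} {S : Set V} (hconn : (T.induce S).Connected) (hinv : ∀ l ∈ L, l • S = S)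
    (hmin : ∀ S' : Set V, S' ⊆ S → (T.induce S').Connected →
      (∀ l ∈ L, l • S' = S') → S' = S) :
    a ∈ S ∧ b ∈ S ↔ ∃ l ∈ L, l • T.side a b ⊂ T.side a b := by
  have hS := hT.2.isPathClosed hconn.preconnected
  have hne : S.Nonempty := Set.nonempty_coe_sort.1 hconn.nonempty
  refine ⟨fun ⟨ha, hb⟩ => hT.exists_smul_side_ssubset_of_mem hact hni hab hconn hinv hmin ha hb,
    fun ⟨l, hl, hlA⟩ => ⟨?_, hT.mem_of_smul_side_ssubset hact hab hl hlA hS hne hinv⟩⟩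
  exact hT.mem_of_smul_side_ssubset hact hab.symm (inv_mem hl)
    (hT.inv_smul_side_swap_ssubset hab hlA) hS hne hinv

/-- If `v` were a leaf, every vertex would be `u` or a leaf hanging at `u`, and then `u` would
be fixed by all of `G`. -/
lemma exists_adj_ne_of_edge_transitive (hT : T.Preconnected)
    (hact : ∀ (g : G) (x y : V), T.Adj x y ↔ T.Adj (g • x) (g • y))
    (hni : ∀ (g : G) (x y : V), T.Adj x y → ¬(g • x = y ∧ g • y = x))
    (hnofix : ¬ ∃ x : V, ∀ g : G, g • x = x) {u v : V} (huv : T.Adj u v)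
    (htrans : ∀ x y : V, T.Adj x y → ∃ g : G, s(g • u, g • v) = s(x, y)) :
    ∃ w, T.Adj v w ∧ w ≠ u := by
  by_contra! hleaf
  have hleaf' : ∀ (g : G) (w : V), T.Adj (g • v) w → w = g • u := fun g w hw => by
    rw [← inv_smul_eq_iff]
    exact hleaf _ ((hact g _ _).2 (by rwa [smul_inv_smul]))
  have hstep : ∀ ⦃x y⦄, T.Adj x y → (x = u ∨ ∀ z, T.Adj x z → z = u) →
      (y = u ∨ ∀ z, T.Adj y z → z = u) := by
    rintro x y hxy (hx | hx)
    · rw [hx] at hxy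
      obtain ⟨g, hg⟩ := htrans u y hxy
      rcases Sym2.eq_iff.1 hg with ⟨hgu, hgv⟩ | ⟨hgu, hgv⟩
      · exact .inr fun z hz => hgu ▸ hleaf' g z (hgv ▸ hz)
      · have hvy : v = y := hgu ▸ hleaf' g v (hgv ▸ huv)
        exact .inr fun z hz => hleaf z (hvy ▸ hz)
    · exact .inl (hx y hxy)
  refine hnofix ⟨u, fun g => ?_⟩
  rcases (hT u (g • u)).of_adj_closed hstep (.inl rfl) with hgu | hgu
  · exact hgu
  · have hgv : g • v = u := hgu _ ((hact g u v).1 huv)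
    exact absurd ⟨(hleaf' g v (hgv ▸ huv)).symm, hgv⟩ (hni g u v huv)

end Action

end SimpleGraph

open SimpleGraph

section EdgeCarriers

variable {V : Type*} (G : Type*)

def edgeCarriers [SMul G V] (u v : V) (B : Set V) : Set G :=
  {k | k • u ∈ B ∧ k • v ∈ B}

variable {G} [Group G] [MulAction G V] {u v : V} {B B' : Set V}

lemma smul_edgeCarriers (g : G) : g • edgeCarriers G u v B = edgeCarriers G u v (g • B) := by
  ext k
  simp only [edgeCarriers, Set.mem_smul_set_iff_inv_smul_mem, Set.mem_ofPred_eq, smul_smul,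
    smul_eq_mul]

lemma edgeCarriers_subset_edgeCarriers_iff {T : SimpleGraph V}
    (htrans : ∀ x y : V, T.Adj x y → ∃ g : G, s(g • u, g • v) = s(x, y))
    (hB : ∀ x ∈ B, ∃ y ∈ B, T.Adj x y) :
    edgeCarriers G u v B ⊆ edgeCarriers G u v B' ↔ B ⊆ B' := by
  refine ⟨fun h x hx => ?_, fun h k hk => ⟨h hk.1, h hk.2⟩⟩
  obtain ⟨y, hy, hxy⟩ := hB x hx
  obtain ⟨k, hk⟩ := htrans x y hxy
  rcases Sym2.eq_iff.1 hk with ⟨hku, hkv⟩ | ⟨hku, hkv⟩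
  · exact hku ▸ (h ⟨hku ▸ hx, hkv ▸ hy⟩).1
  · exact hkv ▸ (h ⟨hku ▸ hy, hkv ▸ hx⟩).2

lemma edgeCarriers_ssubset_edgeCarriers_iff {T : SimpleGraph V}
    (htrans : ∀ x y : V, T.Adj x y → ∃ g : G, s(g • u, g • v) = s(x, y))
    (hB : ∀ x ∈ B, ∃ y ∈ B, T.Adj x y) (hB' : ∀ x ∈ B', ∃ y ∈ B', T.Adj x y) :
    edgeCarriers G u v B ⊂ edgeCarriers G u v B' ↔ B ⊂ B' := by
  simp only [ssubset_iff_subset_not_subset, edgeCarriers_subset_edgeCarriers_iff htrans hB,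
    edgeCarriers_subset_edgeCarriers_iff htrans hB']

end EdgeCarriers

theorem translated_edge_in_minimal_subtree_iff_general
    {V G : Type*} [Group G] [MulAction G V] (T : SimpleGraph V) (hT : T.IsTree)
    -- `G` acts on the tree `T` by automorphisms:
    (hact : ∀ (g : G) (x y : V), T.Adj x y ↔ T.Adj (g • x) (g • y))
    -- the action is without inversions:
    (hni : ∀ (g : G) (x y : V), T.Adj x y → ¬(g • x = y ∧ g • y = x))
    -- no vertex is fixed by every element of `G`:
    (hnofix : ¬ ∃ x : V, ∀ g : G, g • x = x)
    -- `e` is the edge of `T` with endpoints `u` and `v`: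
    (u v : V) (huv : T.Adj u v)
    -- the action is transitive on the (unoriented) edges of `T`:
    (htrans : ∀ x y : V, T.Adj x y → ∃ g : G, s(g • u, g • v) = s(x, y))
    -- `E` is the vertex set of the component of `T − e` containing `v`:
    (E : Set V) (hE : E = {x : V | (T.deleteEdges {s(u, v)}).Reachable v x})
    -- `Y = {k ∈ G : both endpoints of ke lie in E}`, and `Y* = G − Y = Yᶜ`:
    (Y : Set G) (hY : Y = {k : G | k • u ∈ E ∧ k • v ∈ E})
    (L : Subgroup G)
    -- `S` is the vertex set of a minimal `Λ`-invariant subtree `T'` of `T`: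
    (S : Set V) (hconn : (T.induce S).Connected) (hinv : ∀ l ∈ L, l • S = S)
    (hmin : ∀ S' : Set V, S' ⊆ S → (T.induce S').Connected →
      (∀ l ∈ L, l • S' = S') → S' = S)
    (h : G) :
    (h • u ∈ S ∧ h • v ∈ S) ↔
      ∃ l ∈ L, l • (h • Y) ⊂ h • Y ∨ l • (h • Yᶜ) ⊂ h • Yᶜ := by
  have hEside : E = T.side u v := hE
  obtain ⟨c, hvc, hcu⟩ :=
    exists_adj_ne_of_edge_transitive hT.1.preconnected hact hni hnofix huv htrans
  have hcover (g : G) : ∀ x ∈ g • E, ∃ y ∈ g • E, T.Adj x y := by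
    rw [hEside, smul_side hact]
    exact fun x => exists_adj_mem_side ((hact g u v).1 huv) ((hact g v c).1 hvc)
      (hcu <| smul_left_cancel g ·)
  have hYE (g₁ g₂ : G) : g₁ • Y ⊂ g₂ • Y ↔ g₁ • E ⊂ g₂ • E := by
    rw [show Y = edgeCarriers G u v E from hY, smul_edgeCarriers, smul_edgeCarriers]
    exact edgeCarriers_ssubset_edgeCarriers_iff htrans (hcover g₁) (hcover g₂)
  rw [hT.mem_and_mem_iff_exists_smul_side_ssubset hact hni ((hact h u v).1 huv) hconn hinv hmin,
    ← smul_side hact, ← hEside, ← Set.exists_smul_set_ssubset_or_ssubset_smul_set_iff]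
  refine exists_congr fun l => and_congr_right fun _ => or_congr ?_ ?_
  · rw [← mul_smul l h Y, hYE, mul_smul]
  · rw [Set.smul_set_compl, Set.smul_set_compl_ssubset_compl_iff, ← mul_smul l h Y, hYE,
      mul_smul]

theorem translated_edge_in_minimal_subtree_iff
    {V G : Type*} [Group G] [MulAction G V] (T : SimpleGraph V) (hT : T.IsTree)
    -- `G` acts on the tree `T` by automorphisms:
    (hact : ∀ (g : G) (x y : V), T.Adj x y ↔ T.Adj (g • x) (g • y))
    -- the action is without inversions:
    (hni : ∀ (g : G) (x y : V), T.Adj x y → ¬(g • x = y ∧ g • y = x))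
    -- no vertex is fixed by every element of `G`:
    (hnofix : ¬ ∃ x : V, ∀ g : G, g • x = x)
    -- `e` is the edge of `T` with endpoints `u` and `v`:
    (u v : V) (huv : T.Adj u v)
    -- the action is transitive on the (unoriented) edges of `T`:
    (htrans : ∀ x y : V, T.Adj x y → ∃ g : G, s(g • u, g • v) = s(x, y))
    -- `E` is the vertex set of the component of `T − e` containing `v`:
    (E : Set V) (hE : E = {x : V | (T.deleteEdges {s(u, v)}).Reachable v x})
    -- `Y = {k ∈ G : both endpoints of ke lie in E}`, and `Y* = G − Y = Yᶜ`:
    (Y : Set G) (hY : Y = {k : G | k • u ∈ E ∧ k • v ∈ E})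
    -- `Λ` is a subgroup of `G` fixing no vertex of `T`:
    (L : Subgroup G) (hLnofix : ¬ ∃ x : V, ∀ l ∈ L, l • x = x)
    -- `S` is the vertex set of a minimal `Λ`-invariant subtree `T'` of `T`:
    (S : Set V) (hconn : (T.induce S).Connected) (hinv : ∀ l ∈ L, l • S = S)
    (hmin : ∀ S' : Set V, S' ⊆ S → (T.induce S').Connected →
      (∀ l ∈ L, l • S' = S') → S' = S)
    (h : G) :
    (h • u ∈ S ∧ h • v ∈ S) ↔
      ∃ l ∈ L, l • (h • Y) ⊂ h • Y ∨ l • (h • Yᶜ) ⊂ h • Yᶜ :=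
  translated_edge_in_minimal_subtree_iff_general T hT hact hni hnofix u v huv htrans E hE Y hY L S
    hconn hinv hmin h
end
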